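/- arXiv:1001.4552 — 5 statements merged into one kernel-verified Lean document; each statement's English description precedes it below -/
import Mathlib

section
/- Let E be a reflexive real Banach space with the Kadec-Klee property and S its unit sphere. Define the multifunction Ψ : E* → 2^S by Ψ(φ) = {x ∈ S : φ(x) = ‖φ‖_{E*}}. Then the restriction of Ψ to E* \ {0} is upper semicontinuous: for every closed set C ⊆ S, the set {φ ∈ E* \ {0} : Ψ(φ) ∩ C ≠ ∅} is closed in E* \ {0}. -/
/-!
Let `φₙ → φ ≠ 0` in norm and `xₙ ∈ C` with `φₙ xₙ = ‖φₙ‖`; then `φ xₙ → ‖φ‖`. By reflexivity the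
weak closure of `{xₙ}` is weakly compact (Banach–Alaoglu in the bidual). It lies in the separable
closed span of the `xₙ`, on which countably many norming functionals separate points, so it is
metrizable and some subsequence converges weakly, to `y` say. Then `‖y‖ ≤ 1` and `φ y = ‖φ‖`, so
`‖y‖ = 1`, and the Kadec–Klee property makes the convergence strong, whence `y ∈ C`.
-/

open NormedSpace Filter Topology Set Bornology

theorem IsCompact.isSeqCompact_of_separating {X ι 𝕜 : Type*} [TopologicalSpace X] [Countable ι]
    [MetricSpace 𝕜] {K : Set X} (hK : IsCompact K) (f : ι → X → 𝕜) (hf : ∀ i, Continuous (f i))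
    (hsep : ∀ u ∈ K, ∀ v ∈ K, (∀ i, f i u = f i v) → u = v) : IsSeqCompact K := by
  have := Encodable.ofCountable ι
  have := isCompact_iff_compactSpace.mp hK
  have : TopologicalSpace.MetrizableSpace K :=
    Metric.PiNatEmbed.TopologicalSpace.MetrizableSpace.of_countable_separating
      (fun i (u : K) => f i u) (fun i => (hf i).comp continuous_subtype_val) fun u v huv => by
        by_contra! h
        exact huv (Subtype.ext (hsep u u.2 v v.2 h))
  simpa using IsSeqCompact.range (continuous_subtype_val (p := (· ∈ K))).seqContinuous

section DualVectors

variable {𝕜 E : Type*} [RCLike 𝕜] [NormedAddCommGroup E] [NormedSpace 𝕜 E]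

theorem eq_zero_of_mem_closure_range_of_dual_vectors {ι : Type*} {y : ι → E}
    {ψ : ι → StrongDual 𝕜 E} (hψ : ∀ i, ‖ψ i‖ ≤ 1) (hψy : ∀ i, ψ i (y i) = ‖y i‖) {w : E}
    (hw : w ∈ closure (range y)) (hψw : ∀ i, ψ i w = 0) : w = 0 := by
  by_contra hw0
  obtain ⟨i, hi⟩ := Metric.mem_closure_range_iff.mp hw (‖w‖ / 2) (by positivity)
  rw [dist_eq_norm] at hi
  have hyi : ‖y i‖ ≤ ‖w - y i‖ := calc
    ‖y i‖ = ‖ψ i (y i - w)‖ := by simp [hψy, hψw]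
    _ ≤ ‖ψ i‖ * ‖y i - w‖ := (ψ i).le_opNorm _
    _ ≤ ‖w - y i‖ := by
      rw [norm_sub_rev]
      exact mul_le_of_le_one_left (norm_nonneg _) (hψ i)
  linarith [norm_sub_norm_le w (y i), norm_pos_iff.mpr hw0]

theorem TopologicalSpace.IsSeparable.exists_separating_dual_seq {s : Set E} (hs : IsSeparable s) :
    ∃ ψ : ℕ → StrongDual 𝕜 E, ∀ w ∈ s, (∀ n, ψ n w = 0) → w = 0 := by
  obtain ⟨c, hc, hsc⟩ := hs
  obtain ⟨y, hy⟩ := countable_iff_exists_subset_range.mp hc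
  choose ψ hψ hψy using fun n => exists_dual_vector'' 𝕜 (y n)
  exact ⟨ψ, fun w hw =>
    eq_zero_of_mem_closure_range_of_dual_vectors hψ hψy (closure_mono hy (hsc hw))⟩

theorem norm_le_of_forall_dual_tendsto {ι : Type*} {l : Filter ι} [l.NeBot] {x : ι → E} {y : E}
    {r : ℝ} (hx : ∀ᶠ i in l, ‖x i‖ ≤ r)
    (hxy : ∀ f : StrongDual 𝕜 E, Tendsto (fun i => f (x i)) l (𝓝 (f y))) : ‖y‖ ≤ r := by
  obtain ⟨i, hi⟩ := hx.exists
  refine norm_le_dual_bound 𝕜 y ((norm_nonneg _).trans hi) fun f => ?_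
  refine le_of_tendsto (hxy f).norm (hx.mono fun i hi => ?_)
  calc ‖f (x i)‖ ≤ ‖f‖ * ‖x i‖ := f.le_opNorm _
    _ ≤ r * ‖f‖ := by rw [mul_comm]; gcongr

theorem norm_eq_one_of_norm_apply_eq_opNorm {φ : StrongDual 𝕜 E} (hφ : φ ≠ 0) {y : E}
    (hy : ‖y‖ ≤ 1) (hφy : ‖φ y‖ = ‖φ‖) : ‖y‖ = 1 := by
  refine le_antisymm hy (le_of_mul_le_mul_left ?_ (norm_pos_iff.mpr hφ))
  calc ‖φ‖ * 1 = ‖φ y‖ := by rw [mul_one, hφy]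
    _ ≤ ‖φ‖ * ‖y‖ := φ.le_opNorm y

theorem tendsto_apply_sub_apply_of_tendsto {ι : Type*} {l : Filter ι} {Φ : ι → StrongDual 𝕜 E}
    {φ : StrongDual 𝕜 E} (hΦ : Tendsto Φ l (𝓝 φ)) {x : ι → E} {r : ℝ} (hx : ∀ i, ‖x i‖ ≤ r) :
    Tendsto (fun i => Φ i (x i) - φ (x i)) l (𝓝 0) := by
  refine squeeze_zero_norm (fun i => ?_)
    (by simpa using (tendsto_iff_norm_sub_tendsto_zero.mp hΦ).mul_const r)
  calc ‖Φ i (x i) - φ (x i)‖ = ‖(Φ i - φ) (x i)‖ := rfl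
    _ ≤ ‖Φ i - φ‖ * ‖x i‖ := (Φ i - φ).le_opNorm _
    _ ≤ ‖Φ i - φ‖ * r := by gcongr; exact hx i

end DualVectors

section Reflexive

variable {E : Type*} [NormedAddCommGroup E] [NormedSpace ℝ E]

theorem surjective_inclusionInDoubleDualWeak
    (hrefl : Function.Surjective (inclusionInDoubleDual ℝ E)) :
    Function.Surjective (inclusionInDoubleDualWeak ℝ E) :=
  StrongDual.toWeakDual.surjective.comp (hrefl.comp (toWeakSpace ℝ E).symm.surjective)

theorem exists_subseq_forall_dual_tendsto_of_isBounded
    (hrefl : Function.Surjective (inclusionInDoubleDual ℝ E)) {x : ℕ → E}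
    (hx : IsBounded (range x)) :
    ∃ (y : E) (k : ℕ → ℕ), StrictMono k ∧
      ∀ f : StrongDual ℝ E, Tendsto (fun j => f (x (k j))) atTop (𝓝 (f y)) := by
  set V := Submodule.span ℝ (range x)
  obtain ⟨ψ, hψ⟩ :=
    ((countable_range x).isSeparable.span (R := ℝ)).closure.exists_separating_dual_seq (𝕜 := ℝ)
  set K := closure (toWeakSpace ℝ E '' range x)
  have hK : IsCompact K := isCompact_closure_of_isBounded ℝ E _
    (by rwa [(toWeakSpace ℝ E).injective.preimage_image])
    (by rw [(surjective_inclusionInDoubleDualWeak hrefl).range_eq]; exact subset_univ _)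
  have hKV : K ⊆ toWeakSpace ℝ E '' closure V := by
    rw [V.convex.toWeakSpace_closure ℝ]
    exact closure_mono (image_mono Submodule.subset_span)
  have hseq : IsSeqCompact K := by
    refine hK.isSeqCompact_of_separating (fun n u => ψ n ((toWeakSpace ℝ E).symm u))
      (fun n => WeakBilin.eval_continuous _ (ψ n)) ?_
    rintro _ hu _ hv huv
    obtain ⟨a, ha, rfl⟩ := hKV hu
    obtain ⟨b, hb, rfl⟩ := hKV hv
    have hab : a - b ∈ closure (V : Set E) := by
      rw [← Submodule.topologicalClosure_coe] at ha hb ⊢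
      exact V.topologicalClosure.sub_mem ha hb
    have hab0 := hψ (a - b) hab fun n => by simpa [sub_eq_zero] using huv n
    rw [sub_eq_zero.mp hab0]
  obtain ⟨z, -, k, hk, hz⟩ := hseq fun n => subset_closure (mem_image_of_mem _ (mem_range_self n))
  exact ⟨(toWeakSpace ℝ E).symm z, k, hk,
    fun f => ((WeakBilin.eval_continuous _ f).tendsto z).comp hz⟩

end Reflexive

theorem stmt1_general (E : Type*) [NormedAddCommGroup E] [NormedSpace ℝ E]
    (hrefl : Function.Surjective (inclusionInDoubleDual ℝ E))
    (hKK : ∀ (x : ℕ → E) (y : E), (∀ n, ‖x n‖ = 1) → ‖y‖ = 1 →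
      (∀ φ : StrongDual ℝ E, Tendsto (fun n => φ (x n)) atTop (𝓝 (φ y))) →
      Tendsto (fun n => ‖x n - y‖) atTop (𝓝 0))
    (C : Set E) (hCS : C ⊆ Metric.sphere (0 : E) 1) (hC : IsClosed C) :
    IsClosed {φ : {ψ : StrongDual ℝ E // ψ ≠ 0} | ∃ x ∈ C, (φ : StrongDual ℝ E) x = ‖(φ : StrongDual ℝ E)‖} := by
  refine IsSeqClosed.isClosed fun Φ φ hΦC hΦφ => ?_
  choose x hxC hxΦ using hΦC
  have hx1 : ∀ n, ‖x n‖ = 1 := fun n => by simpa using hCS (hxC n)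
  have hΦ : Tendsto (fun n => (Φ n : StrongDual ℝ E)) atTop (𝓝 φ) :=
    (continuous_subtype_val.tendsto φ).comp hΦφ
  have hφx : Tendsto (fun n => (φ : StrongDual ℝ E) (x n)) atTop (𝓝 ‖(φ : StrongDual ℝ E)‖) := by
    simpa [hxΦ] using hΦ.norm.sub (tendsto_apply_sub_apply_of_tendsto hΦ fun n => (hx1 n).le)
  obtain ⟨y, k, hk, hy⟩ := exists_subseq_forall_dual_tendsto_of_isBounded hrefl
    (isBounded_iff_forall_norm_le.mpr ⟨1, forall_mem_range.mpr fun n => (hx1 n).le⟩)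
  have hφy : (φ : StrongDual ℝ E) y = ‖(φ : StrongDual ℝ E)‖ :=
    tendsto_nhds_unique (hy φ) (hφx.comp hk.tendsto_atTop)
  have hy1 : ‖y‖ = 1 := norm_eq_one_of_norm_apply_eq_opNorm φ.2
    (norm_le_of_forall_dual_tendsto (.of_forall fun j => (hx1 (k j)).le) hy) (by simp [hφy])
  have hxy : Tendsto (fun j => x (k j)) atTop (𝓝 y) :=
    tendsto_iff_norm_sub_tendsto_zero.mpr (hKK _ y (fun j => hx1 (k j)) hy1 hy)
  exact ⟨y, hC.mem_of_tendsto hxy (.of_forall fun j => hxC (k j)), hφy⟩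

/-- The restriction of `Ψ(φ) = {x ∈ S : φ x = ‖φ‖}` to `E* \ {0}` is upper semicontinuous. -/
theorem stmt1 (E : Type*) [NormedAddCommGroup E] [NormedSpace ℝ E] [CompleteSpace E]
    (hrefl : Function.Surjective (inclusionInDoubleDual ℝ E))
    (hKK : ∀ (x : ℕ → E) (y : E), (∀ n, ‖x n‖ = 1) → ‖y‖ = 1 →
      (∀ φ : StrongDual ℝ E, Tendsto (fun n => φ (x n)) atTop (𝓝 (φ y))) →
      Tendsto (fun n => ‖x n - y‖) atTop (𝓝 0))
    (C : Set E) (hCS : C ⊆ Metric.sphere (0 : E) 1) (hC : IsClosed C) :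
    IsClosed {φ : {ψ : StrongDual ℝ E // ψ ≠ 0} | ∃ x ∈ C, (φ : StrongDual ℝ E) x = ‖(φ : StrongDual ℝ E)‖} :=
  stmt1_general E hrefl hKK C hCS hC
end

section
/- Let E be an infinite-dimensional reflexive real Banach space with the Kadec-Klee property and let φ ∈ E* be nonzero. Then the set Ψ(φ) = {x ∈ E : ‖x‖ = 1 and φ(x) = ‖φ‖_{E*}} is compact in the norm topology. -/
/-!
A sequence in `Ψ(φ)` is bounded, so by reflexivity (Banach–Alaoglu in the bidual) its weak
closure is weakly compact. This weak closure lies in the closed span of the sequence, which is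
separable and hence separated by countably many functionals; on a weakly compact set these
induce the weak topology, which is therefore metrizable there, and so some subsequence
converges weakly to a point `y`. Weak limits preserve `φ x = ‖φ‖` and `‖x‖ ≤ 1`, which force
`‖y‖ = 1`, and the Kadec–Klee property upgrades the weak convergence to norm convergence.
-/

open NormedSpace Filter Topology Set Bornology

theorem IsCompact.isSeqCompact_of_continuous_injOn {X Y : Type*} [TopologicalSpace X]
    [TopologicalSpace Y] [TopologicalSpace.MetrizableSpace Y] {K : Set X} (hK : IsCompact K)
    {f : X → Y} (hf : Continuous f) (hinj : InjOn f K) : IsSeqCompact K := by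
  have := isCompact_iff_compactSpace.mp hK
  have hemb := (hf.comp continuous_subtype_val).isClosedEmbedding hinj.injective
  have := hemb.isEmbedding.metrizableSpace
  rw [isSeqCompact_iff_seqCompactSpace]
  infer_instance

theorem TopologicalSpace.IsSeparable.exists_seq_strongDual_separating {𝕜 E : Type*}
    [RCLike 𝕜] [NormedAddCommGroup E] [NormedSpace 𝕜 E] {S : Set E} (hS : IsSeparable S) :
    ∃ f : ℕ → StrongDual 𝕜 E, ∀ w ∈ S, (∀ k, f k w = 0) → w = 0 := by
  obtain ⟨c, hc, hSc⟩ := hS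
  obtain ⟨d, hd⟩ := (hc.insert 0).exists_eq_range (insert_nonempty 0 c)
  choose f hf_norm hf_apply using fun k => exists_dual_vector'' 𝕜 (d k)
  refine ⟨f, fun w hw hfw => norm_le_zero_iff.mp <| le_of_forall_pos_lt_add fun ε hε => ?_⟩
  have hwd : w ∈ closure (range d) := closure_mono (hd ▸ subset_insert 0 c) (hSc hw)
  obtain ⟨_, ⟨k, rfl⟩, hk⟩ := Metric.mem_closure_iff.mp hwd (ε / 2) (half_pos hε)
  rw [dist_eq_norm] at hk
  have hdk : ‖d k‖ ≤ ‖w - d k‖ := calc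
    ‖d k‖ = ‖f k (d k - w)‖ := by
      rw [map_sub, hfw k, sub_zero, hf_apply, RCLike.norm_ofReal, abs_norm]
    _ ≤ ‖f k‖ * ‖d k - w‖ := (f k).le_opNorm _
    _ ≤ ‖w - d k‖ := by
      rw [norm_sub_rev]
      exact mul_le_of_le_one_left (norm_nonneg _) (hf_norm k)
  calc ‖w‖ ≤ ‖d k‖ + ‖w - d k‖ := norm_le_norm_add_norm_sub' w (d k)
    _ < 0 + ε := by linarith

theorem Convex.isClosed_toWeakSpace_image {E : Type*} [NormedAddCommGroup E] [NormedSpace ℝ E]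
    {s : Set E} (hs : Convex ℝ s) (hs' : IsClosed s) : IsClosed (toWeakSpace ℝ E '' s) := by
  rw [← closure_eq_iff_isClosed, ← hs.toWeakSpace_closure ℝ, hs'.closure_eq]

theorem isCompact_closure_toWeakSpace_image {𝕜 E : Type*} [RCLike 𝕜] [NormedAddCommGroup E]
    [NormedSpace 𝕜 E] (hrefl : Function.Surjective (inclusionInDoubleDual 𝕜 E)) {s : Set E}
    (hs : IsBounded s) : IsCompact (closure (toWeakSpace 𝕜 E '' s)) := by
  have hs' : IsBounded (toWeakSpace 𝕜 E ⁻¹' (toWeakSpace 𝕜 E '' s)) := by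
    rwa [(toWeakSpace 𝕜 E).injective.preimage_image]
  refine isCompact_closure_of_isBounded 𝕜 E _ hs' fun Λ _ => ?_
  obtain ⟨x, hx⟩ := hrefl (WeakDual.toStrongDual Λ)
  exact ⟨toWeakSpace 𝕜 E x, DFunLike.ext _ _ (DFunLike.congr_fun hx)⟩

theorem exists_strictMono_tendsto_toWeakSpace {E : Type*} [NormedAddCommGroup E]
    [NormedSpace ℝ E] (hrefl : Function.Surjective (inclusionInDoubleDual ℝ E)) {x : ℕ → E}
    (hx : IsBounded (range x)) : ∃ y : E, ∃ g : ℕ → ℕ, StrictMono g ∧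
      Tendsto (fun n => toWeakSpace ℝ E (x (g n))) atTop (𝓝 (toWeakSpace ℝ E y)) := by
  set F := (Submodule.span ℝ (range x)).topologicalClosure
  have hxF : range x ⊆ F := fun _ hz =>
    Submodule.le_topologicalClosure _ (Submodule.subset_span hz)
  have hFsep : TopologicalSpace.IsSeparable (F : Set E) := by
    rw [Submodule.topologicalClosure_coe]
    exact (countable_range x).isSeparable.span.closure
  obtain ⟨f, hf⟩ := hFsep.exists_seq_strongDual_separating (𝕜 := ℝ)
  set K := closure (toWeakSpace ℝ E '' range x)
  have hKF : K ⊆ toWeakSpace ℝ E '' F :=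
    closure_minimal (image_mono hxF)
      (F.convex.isClosed_toWeakSpace_image (Submodule.isClosed_topologicalClosure _))
  -- on the weakly compact set `K` the countably many functionals `f k` induce the weak topology
  have hcont : Continuous fun (w : WeakSpace ℝ E) k => f k w :=
    continuous_pi fun k => WeakBilin.eval_continuous _ (f k)
  have hinj : InjOn (fun (w : WeakSpace ℝ E) k => f k w) K := by
    rintro _ ha _ hb hab
    obtain ⟨a, haF, rfl⟩ := hKF ha
    obtain ⟨b, hbF, rfl⟩ := hKF hb
    have := hf (a - b) (F.sub_mem haF hbF) fun k => by
      rw [map_sub, sub_eq_zero]; exact congr_fun hab k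
    rw [sub_eq_zero.mp this]
  obtain ⟨y, -, g, hg, hlim⟩ :=
    (isCompact_closure_toWeakSpace_image hrefl hx).isSeqCompact_of_continuous_injOn hcont hinj
      fun n => subset_closure (mem_image_of_mem _ (mem_range_self n))
  exact ⟨(toWeakSpace ℝ E).symm y, g, hg, by simpa [Function.comp_def] using hlim⟩

theorem stmt3_general (E : Type*) [NormedAddCommGroup E] [NormedSpace ℝ E]
    (hrefl : Function.Surjective (inclusionInDoubleDual ℝ E))
    (hKK : ∀ (x : ℕ → E) (y : E), (∀ n, ‖x n‖ = 1) → ‖y‖ = 1 →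
      (∀ φ : StrongDual ℝ E, Tendsto (fun n => φ (x n)) atTop (𝓝 (φ y))) →
      Tendsto (fun n => ‖x n - y‖) atTop (𝓝 0))
    (φ : StrongDual ℝ E) (hφ : φ ≠ 0) :
    IsCompact {x : E | ‖x‖ = 1 ∧ φ x = ‖φ‖} := by
  rw [isCompact_iff_isSeqCompact]
  intro x hx
  have hx_ball : ∀ n, x n ∈ Metric.closedBall 0 1 := fun n => by simp [(hx n).1]
  obtain ⟨y, g, hg, hweak⟩ := exists_strictMono_tendsto_toWeakSpace hrefl
    (Metric.isBounded_closedBall.subset (range_subset_iff.mpr hx_ball))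
  have hlim (ψ : StrongDual ℝ E) : Tendsto (fun n => ψ (x (g n))) atTop (𝓝 (ψ y)) :=
    ((WeakBilin.eval_continuous _ ψ).tendsto _).comp hweak
  have hφy : φ y = ‖φ‖ :=
    tendsto_nhds_unique (hlim φ) (by simp only [(hx _).2]; exact tendsto_const_nhds)
  have hy_le : ‖y‖ ≤ 1 := by
    have := ((convex_closedBall (0 : E) 1).isClosed_toWeakSpace_image
      Metric.isClosed_closedBall).mem_of_tendsto hweak
      (Eventually.of_forall fun n => mem_image_of_mem _ (hx_ball (g n)))
    simpa using (toWeakSpace ℝ E).injective.mem_set_image.mp this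
  have hy : ‖y‖ = 1 := by
    refine le_antisymm hy_le (le_of_mul_le_mul_left ?_ (norm_pos_iff.mpr hφ))
    calc ‖φ‖ * 1 = φ y := by rw [mul_one, hφy]
      _ ≤ ‖φ‖ * ‖y‖ := (le_abs_self _).trans (φ.le_opNorm y)
  refine ⟨y, ⟨hy, hφy⟩, g, hg, tendsto_iff_norm_sub_tendsto_zero.mpr ?_⟩
  exact hKK (x ∘ g) y (fun n => (hx (g n)).1) hy hlim

/-- For a nonzero functional on an infinite-dimensional reflexive space with the
Kadec-Klee property, `Ψ(φ)` is norm compact. -/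
theorem stmt3 (E : Type*) [NormedAddCommGroup E] [NormedSpace ℝ E] [CompleteSpace E]
    (hrefl : Function.Surjective (inclusionInDoubleDual ℝ E))
    (hdim : ¬ FiniteDimensional ℝ E)
    (hKK : ∀ (x : ℕ → E) (y : E), (∀ n, ‖x n‖ = 1) → ‖y‖ = 1 →
      (∀ φ : StrongDual ℝ E, Tendsto (fun n => φ (x n)) atTop (𝓝 (φ y))) →
      Tendsto (fun n => ‖x n - y‖) atTop (𝓝 0))
    (φ : StrongDual ℝ E) (hφ : φ ≠ 0) :
    IsCompact {x : E | ‖x‖ = 1 ∧ φ x = ‖φ‖} :=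
  stmt3_general E hrefl hKK φ hφ
end

section
/- Let E = H¹(0,1) (the Sobolev space of absolutely continuous functions u : [0,1] → ℝ with u' ∈ L²) with its usual norm, and S its unit sphere. Define f : S → E* by f(u)(v) = −∫₀¹ u(t)v(t) dt. Then f is a compact map, and for every u ∈ S one has f(u)(u) < 0 < ‖f(u)‖_{E*}; in particular there is no û ∈ S with f(û)(û) = ‖f(û)‖_{E*}. -/
open MeasureTheory intervalIntegral

/-- `u` is an `H¹(0,1)` function with (a.e.) derivative `g`: it is absolutely continuous
on `[0,1]`, being the integral of the function `g` whose square is integrable. -/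
def IsH1 (u g : ℝ → ℝ) : Prop :=
  IntervalIntegrable g MeasureTheory.volume 0 1 ∧
  IntervalIntegrable (fun t => (g t) ^ 2) MeasureTheory.volume 0 1 ∧
  ∀ t ∈ Set.Icc (0 : ℝ) 1, u t = u 0 + ∫ s in (0 : ℝ)..t, g s

/-- The square of the `H¹(0,1)` norm: `‖u‖² = ∫₀¹ |u'|² + ∫₀¹ |u|²`. -/
noncomputable def H1normSq (u g : ℝ → ℝ) : ℝ :=
  (∫ t in (0 : ℝ)..1, (g t) ^ 2) + ∫ t in (0 : ℝ)..1, (u t) ^ 2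

/-- The dual (operator) norm of the functional `v ↦ -∫₀¹ w v` on `H¹(0,1)`:
the supremum of `|∫₀¹ w v|` over `v` in the closed unit ball of `H¹(0,1)`.
This is also the dual-norm distance between `f(u)` and `f(u')` when `w = u - u'`,
since `f` is (minus) an integral pairing, hence affine in `u`. -/
noncomputable def dualNormH1 (w : ℝ → ℝ) : ℝ :=
  sSup {r : ℝ | ∃ v g : ℝ → ℝ, IsH1 v g ∧ H1normSq v g ≤ 1 ∧
    r = |∫ t in (0 : ℝ)..1, w t * v t|}

open Metric

lemma IsH1.contOn {u g : ℝ → ℝ} (h : IsH1 u g) : ContinuousOn u (Set.Icc 0 1) := by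
  have hprim : ContinuousOn (fun x => u 0 + ∫ s in (0:ℝ)..x, g s) (Set.Icc 0 1) := by
    apply ContinuousOn.add continuousOn_const
    have hi : IntegrableOn g (Set.uIcc (0:ℝ) 1) volume := by
      rw [Set.uIcc_of_le (by norm_num : (0:ℝ) ≤ 1)]
      exact (intervalIntegrable_iff_integrableOn_Icc_of_le (by norm_num)).mp h.1
    simpa [Set.uIcc_of_le (by norm_num : (0:ℝ) ≤ 1)] using
      intervalIntegral.continuousOn_primitive_interval (a := 0) (b := 1) (μ := volume) hi
  exact hprim.congr (fun t ht => h.2.2 t ht)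


lemma contOn_ii {f : ℝ → ℝ} (hf : ContinuousOn f (Set.Icc 0 1)) {a b : ℝ}
    (ha : a ∈ Set.Icc (0:ℝ) 1) (hb : b ∈ Set.Icc (0:ℝ) 1) :
    IntervalIntegrable f volume a b := by
  apply ContinuousOn.intervalIntegrable
  apply hf.mono
  intro x hx
  rcases Set.mem_uIcc.mp hx with h | h
  · exact ⟨le_trans ha.1 h.1, le_trans h.2 hb.2⟩
  · exact ⟨le_trans hb.1 h.1, le_trans h.2 ha.2⟩


/-- Cauchy–Schwarz for interval integrals. -/
lemma cs_int {a b : ℝ} (hab : a ≤ b) (f h : ℝ → ℝ)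
    (hf2 : IntervalIntegrable (fun t => f t ^ 2) volume a b)
    (hh2 : IntervalIntegrable (fun t => h t ^ 2) volume a b)
    (hfh : IntervalIntegrable (fun t => f t * h t) volume a b) :
    |∫ t in a..b, f t * h t| ≤
      Real.sqrt (∫ t in a..b, f t ^ 2) * Real.sqrt (∫ t in a..b, h t ^ 2) := by
  set A := ∫ t in a..b, f t ^ 2 with hA
  set B := ∫ t in a..b, f t * h t with hB
  set C := ∫ t in a..b, h t ^ 2 with hC
  have hAnn : 0 ≤ A := intervalIntegral.integral_nonneg hab (fun t _ => sq_nonneg _)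
  have hCnn : 0 ≤ C := intervalIntegral.integral_nonneg hab (fun t _ => sq_nonneg _)
  have key : ∀ x : ℝ, 0 ≤ C * (x * x) + (2 * B) * x + A := by
    intro x
    have expand : ∀ t : ℝ, (x * h t + f t) ^ 2
        = x ^ 2 * h t ^ 2 + 2 * x * (f t * h t) + f t ^ 2 := by intro t; ring
    have hint : ∫ t in a..b, (x * h t + f t) ^ 2
        = x ^ 2 * C + 2 * x * B + A := by
      rw [hA, hB, hC]
      have h1 : IntervalIntegrable (fun t => x ^ 2 * h t ^ 2) volume a b := hh2.const_mul _
      have h2 : IntervalIntegrable (fun t => 2 * x * (f t * h t)) volume a b := hfh.const_mul _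
      calc ∫ t in a..b, (x * h t + f t) ^ 2
          = ∫ t in a..b, (x ^ 2 * h t ^ 2 + 2 * x * (f t * h t) + f t ^ 2) := by
            simp only [expand]
        _ = (∫ t in a..b, (x ^ 2 * h t ^ 2 + 2 * x * (f t * h t))) + ∫ t in a..b, f t ^ 2 :=
            intervalIntegral.integral_add (h1.add h2) hf2
        _ = (∫ t in a..b, x ^ 2 * h t ^ 2) + (∫ t in a..b, 2 * x * (f t * h t))
              + ∫ t in a..b, f t ^ 2 := by rw [intervalIntegral.integral_add h1 h2]
        _ = x ^ 2 * (∫ t in a..b, h t ^ 2) + 2 * x * (∫ t in a..b, f t * h t)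
              + ∫ t in a..b, f t ^ 2 := by
            rw [intervalIntegral.integral_const_mul, intervalIntegral.integral_const_mul]
    have hnn : 0 ≤ ∫ t in a..b, (x * h t + f t) ^ 2 :=
      intervalIntegral.integral_nonneg hab (fun t _ => sq_nonneg _)
    nlinarith [hnn, hint]
  have hd := discrim_le_zero key
  rw [discrim] at hd
  have hB2 : B ^ 2 ≤ A * C := by nlinarith
  calc |B| = Real.sqrt (B ^ 2) := (Real.sqrt_sq_eq_abs B).symm
    _ ≤ Real.sqrt (A * C) := Real.sqrt_le_sqrt hB2
    _ = Real.sqrt A * Real.sqrt C := Real.sqrt_mul hAnn _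


lemma mem01 : (0:ℝ) ∈ Set.Icc (0:ℝ) 1 := by norm_num
lemma mem11 : (1:ℝ) ∈ Set.Icc (0:ℝ) 1 := by norm_num

/-- every element of the dual-norm defining set is at most `sqrt (∫ w²)`. -/
lemma dual_set_le {w : ℝ → ℝ} (hw : ContinuousOn w (Set.Icc 0 1)) {r : ℝ}
    (hr : r ∈ {r : ℝ | ∃ v g : ℝ → ℝ, IsH1 v g ∧ H1normSq v g ≤ 1 ∧
      r = |∫ t in (0 : ℝ)..1, w t * v t|}) :
    r ≤ Real.sqrt (∫ t in (0:ℝ)..1, w t ^ 2) := by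
  obtain ⟨v, g, hv, hnorm, rfl⟩ := hr
  have hvc := hv.contOn
  have hi1 : IntervalIntegrable (fun t => w t ^ 2) volume 0 1 :=
    contOn_ii (by exact (hw.pow 2)) mem01 mem11
  have hi2 : IntervalIntegrable (fun t => v t ^ 2) volume 0 1 :=
    contOn_ii (by exact (hvc.pow 2)) mem01 mem11
  have hi3 : IntervalIntegrable (fun t => w t * v t) volume 0 1 :=
    contOn_ii (hw.mul hvc) mem01 mem11
  have hcs := cs_int (by norm_num : (0:ℝ) ≤ 1) w v hi1 hi2 hi3
  have hv2le : ∫ t in (0:ℝ)..1, v t ^ 2 ≤ 1 := by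
    have hgnn : 0 ≤ ∫ t in (0:ℝ)..1, g t ^ 2 :=
      intervalIntegral.integral_nonneg (by norm_num) (fun t _ => sq_nonneg _)
    have := hnorm; unfold H1normSq at this; linarith
  have : Real.sqrt (∫ t in (0:ℝ)..1, v t ^ 2) ≤ 1 := by
    have h' := Real.sqrt_le_sqrt hv2le
    rwa [Real.sqrt_one] at h'
  calc |∫ t in (0:ℝ)..1, w t * v t|
      ≤ Real.sqrt (∫ t in (0:ℝ)..1, w t ^ 2) * Real.sqrt (∫ t in (0:ℝ)..1, v t ^ 2) := hcs
    _ ≤ Real.sqrt (∫ t in (0:ℝ)..1, w t ^ 2) * 1 := by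
        apply mul_le_mul_of_nonneg_left this (Real.sqrt_nonneg _)
    _ = Real.sqrt (∫ t in (0:ℝ)..1, w t ^ 2) := mul_one _

lemma dual_le {w : ℝ → ℝ} (hw : ContinuousOn w (Set.Icc 0 1)) :
    dualNormH1 w ≤ Real.sqrt (∫ t in (0:ℝ)..1, w t ^ 2) :=
  Real.sSup_le (fun r hr => dual_set_le hw hr) (Real.sqrt_nonneg _)

lemma dual_bddAbove {w : ℝ → ℝ} (hw : ContinuousOn w (Set.Icc 0 1)) :
    BddAbove {r : ℝ | ∃ v g : ℝ → ℝ, IsH1 v g ∧ H1normSq v g ≤ 1 ∧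
      r = |∫ t in (0 : ℝ)..1, w t * v t|} :=
  ⟨_, fun _ hr => dual_set_le hw hr⟩

lemma dual_ge {w : ℝ → ℝ} (hw : ContinuousOn w (Set.Icc 0 1)) {v g : ℝ → ℝ}
    (hv : IsH1 v g) (hn : H1normSq v g ≤ 1) :
    |∫ t in (0:ℝ)..1, w t * v t| ≤ dualNormH1 w :=
  le_csSup (dual_bddAbove hw) ⟨v, g, hv, hn, rfl⟩

lemma ii_mono {f : ℝ → ℝ} (hf : IntervalIntegrable f volume 0 1) {a b : ℝ}
    (ha : a ∈ Set.Icc (0:ℝ) 1) (hb : b ∈ Set.Icc (0:ℝ) 1) :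
    IntervalIntegrable f volume a b := by
  apply hf.mono_set
  rw [Set.uIcc_subset_uIcc_iff_mem, Set.uIcc_of_le (by norm_num : (0:ℝ) ≤ 1)]
  exact ⟨ha, hb⟩

lemma prim_diff {u g : ℝ → ℝ} (h : IsH1 u g) {s t : ℝ}
    (hs : s ∈ Set.Icc (0:ℝ) 1) (ht : t ∈ Set.Icc (0:ℝ) 1) :
    u t - u s = ∫ x in s..t, g x := by
  rw [h.2.2 t ht, h.2.2 s hs]
  have h01 : (0:ℝ) ∈ Set.Icc (0:ℝ) 1 := by norm_num
  have hit : IntervalIntegrable g volume 0 t := ii_mono h.1 h01 ht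
  have his : IntervalIntegrable g volume 0 s := ii_mono h.1 h01 hs
  have key := intervalIntegral.integral_interval_sub_left hit his
  linarith [key]

lemma sub_sq_le {u g : ℝ → ℝ} (h : IsH1 u g) {s t : ℝ}
    (hs : s ∈ Set.Icc (0:ℝ) 1) (ht : t ∈ Set.Icc (0:ℝ) 1) (hst : s ≤ t) :
    (∫ x in s..t, g x ^ 2) ≤ ∫ x in (0:ℝ)..1, g x ^ 2 := by
  have h1 : IntervalIntegrable (fun x => g x ^ 2) volume 0 s := ii_mono h.2.1 (by norm_num) hs
  have h2 : IntervalIntegrable (fun x => g x ^ 2) volume s t := ii_mono h.2.1 hs ht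
  have h3 : IntervalIntegrable (fun x => g x ^ 2) volume t 1 := ii_mono h.2.1 ht (by norm_num)
  have e1 := intervalIntegral.integral_add_adjacent_intervals h1 h2
  have e2 := intervalIntegral.integral_add_adjacent_intervals (h1.trans h2) h3
  have n1 : 0 ≤ ∫ x in (0:ℝ)..s, g x ^ 2 :=
    intervalIntegral.integral_nonneg hs.1 (fun x _ => sq_nonneg _)
  have n3 : 0 ≤ ∫ x in t..1, g x ^ 2 :=
    intervalIntegral.integral_nonneg ht.2 (fun x _ => sq_nonneg _)
  linarith [e1, e2]

lemma holder {u g : ℝ → ℝ} (h : IsH1 u g) (hg2 : (∫ x in (0:ℝ)..1, g x ^ 2) ≤ 1)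
    {s t : ℝ} (hs : s ∈ Set.Icc (0:ℝ) 1) (ht : t ∈ Set.Icc (0:ℝ) 1) (hst : s ≤ t) :
    |u t - u s| ≤ Real.sqrt (t - s) := by
  rw [prim_diff h hs ht]
  have h2 : IntervalIntegrable (fun x => g x ^ 2) volume s t := ii_mono h.2.1 hs ht
  have h1 : IntervalIntegrable g volume s t := ii_mono h.1 hs ht
  have hone : IntervalIntegrable (fun _ : ℝ => (1:ℝ) ^ 2) volume s t := by
    simpa using intervalIntegrable_const (μ := volume) (a := s) (b := t) (c := (1:ℝ))
  have hcs := cs_int hst g (fun _ => 1) h2 hone (by simpa using h1)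
  have e1 : (∫ x in s..t, g x * 1) = ∫ x in s..t, g x := by simp
  have e2 : (∫ x in s..t, (1:ℝ) ^ 2) = t - s := by simp
  rw [e1, e2] at hcs
  calc |∫ x in s..t, g x| ≤ Real.sqrt (∫ x in s..t, g x ^ 2) * Real.sqrt (t - s) := hcs
    _ ≤ 1 * Real.sqrt (t - s) := by
        apply mul_le_mul_of_nonneg_right _ (Real.sqrt_nonneg _)
        have h' := Real.sqrt_le_sqrt (le_trans (sub_sq_le h hs ht hst) hg2)
        rwa [Real.sqrt_one] at h'
    _ = Real.sqrt (t - s) := one_mul _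

lemma sq_sub_le {f : ℝ → ℝ} (hi : IntervalIntegrable (fun x => f x ^ 2) volume 0 1)
    {s t : ℝ} (hs : s ∈ Set.Icc (0:ℝ) 1) (ht : t ∈ Set.Icc (0:ℝ) 1) :
    (∫ x in s..t, f x ^ 2) ≤ ∫ x in (0:ℝ)..1, f x ^ 2 := by
  have hmono : ∀ a b : ℝ, a ∈ Set.Icc (0:ℝ) 1 → b ∈ Set.Icc (0:ℝ) 1 →
      IntervalIntegrable (fun x => f x ^ 2) volume a b := by
    intro a b ha hb
    apply hi.mono_set
    rw [Set.uIcc_subset_uIcc_iff_mem, Set.uIcc_of_le (by norm_num : (0:ℝ) ≤ 1)]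
    exact ⟨ha, hb⟩
  rcases le_total s t with hst | hst
  · have h1 := hmono 0 s (by norm_num) hs
    have h2 := hmono s t hs ht
    have h3 := hmono t 1 ht (by norm_num)
    have e1 := intervalIntegral.integral_add_adjacent_intervals h1 h2
    have e2 := intervalIntegral.integral_add_adjacent_intervals (h1.trans h2) h3
    have n1 : 0 ≤ ∫ x in (0:ℝ)..s, f x ^ 2 :=
      intervalIntegral.integral_nonneg hs.1 (fun x _ => sq_nonneg _)
    have n3 : 0 ≤ ∫ x in t..1, f x ^ 2 :=
      intervalIntegral.integral_nonneg ht.2 (fun x _ => sq_nonneg _)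
    linarith
  · have hneg : (∫ x in s..t, f x ^ 2) ≤ 0 := by
      rw [intervalIntegral.integral_symm]
      simp only [neg_nonpos]
      exact intervalIntegral.integral_nonneg hst (fun x _ => sq_nonneg _)
    have : 0 ≤ ∫ x in (0:ℝ)..1, f x ^ 2 :=
      intervalIntegral.integral_nonneg (by norm_num) (fun x _ => sq_nonneg _)
    linarith

lemma eq_zero_on_Icc {u : ℝ → ℝ} (hu : ContinuousOn u (Set.Icc 0 1))
    (hz : (∫ t in (0:ℝ)..1, u t ^ 2) = 0) : ∀ t ∈ Set.Icc (0:ℝ) 1, u t = 0 := by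
  by_contra hcon
  push_neg at hcon
  obtain ⟨t₀, ht₀, hne⟩ := hcon
  have hε : 0 < |u t₀| / 2 := by positivity
  have hcw : ContinuousWithinAt u (Set.Icc 0 1) t₀ := hu t₀ ht₀
  rw [Metric.continuousWithinAt_iff] at hcw
  obtain ⟨δ, hδ, hball⟩ := hcw (|u t₀| / 2) hε
  set c := max 0 (t₀ - δ/2) with hc
  set d := min 1 (t₀ + δ/2) with hd
  have hc0 : 0 ≤ c := le_max_left _ _
  have hd1 : d ≤ 1 := min_le_left _ _
  have hcd : c < d := by
    rcases eq_or_lt_of_le ht₀.1 with h0 | h0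
    · have : c = 0 := by rw [hc, ← h0]; simp [le_of_lt hδ]; linarith
      rw [this, hd]
      apply lt_min (by norm_num)
      rw [← h0]; linarith
    · have hct : c < t₀ := by
        rw [hc]; apply max_lt h0; linarith
      have htd : t₀ ≤ d := le_min ht₀.2 (by linarith)
      linarith
  have hposon : ∀ x ∈ Set.Ioo c d, 0 < u x ^ 2 := by
    intro x hx
    have hx01 : x ∈ Set.Icc (0:ℝ) 1 := ⟨le_trans hc0 hx.1.le, le_trans hx.2.le hd1⟩
    have hdist : dist x t₀ < δ := by
      rw [Real.dist_eq, abs_lt]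
      constructor
      · have : t₀ - δ/2 ≤ c := le_max_right _ _
        linarith [hx.1]
      · have : d ≤ t₀ + δ/2 := min_le_right _ _
        linarith [hx.2]
    have := hball hx01 hdist
    rw [Real.dist_eq] at this
    have : |u t₀| / 2 < |u x| := by
      have h1 := abs_sub_abs_le_abs_sub (u t₀) (u x)
      rw [abs_sub_comm (u x) (u t₀)] at this
      linarith
    have habs : 0 < |u x| := lt_trans (by positivity) this
    rw [← sq_abs]
    exact pow_pos habs 2
  have hii : IntervalIntegrable (fun x => u x ^ 2) volume c d := by
    apply ContinuousOn.intervalIntegrable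
    apply (hu.pow 2).mono
    rw [Set.uIcc_of_le hcd.le]
    intro x hx; exact ⟨le_trans hc0 hx.1, le_trans hx.2 hd1⟩
  have hpos := intervalIntegral_pos_of_pos_on hii hposon hcd
  have hii01 : IntervalIntegrable (fun x => u x ^ 2) volume 0 1 := by
    apply ContinuousOn.intervalIntegrable
    rw [Set.uIcc_of_le (by norm_num : (0:ℝ) ≤ 1)]
    exact hu.pow 2
  have := sq_sub_le hii01 (s := c) (t := d) ⟨hc0, le_trans hcd.le hd1⟩ ⟨le_trans hc0 hcd.le, hd1⟩
  linarith

lemma ae_zero_of_prim_zero {g : ℝ → ℝ} (hg : IntegrableOn g (Set.Ioc 0 1) volume)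
    (hF : ∀ a b : ℝ, 0 ≤ a → a ≤ b → b ≤ 1 → (∫ s in a..b, g s) = 0) :
    ∀ᵐ x ∂(volume.restrict (Set.Ioc (0:ℝ) 1)), g x = 0 := by
  set G : ℝ → ℝ := (Set.Ioc (0:ℝ) 1).indicator g with hGdef
  have hGi : Integrable G volume :=
    (integrable_indicator_iff measurableSet_Ioc).mpr hg
  have hgii : IntervalIntegrable g volume 0 1 := by
    rw [intervalIntegrable_iff_integrableOn_Ioc_of_le (by norm_num)]
    exact hg
  have hzero : ∀ a r : ℝ, (∫ x in closedBall a r, G x) = 0 := by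
    intro a r
    rw [Real.closedBall_eq_Icc, MeasureTheory.integral_Icc_eq_integral_Ioc,
      hGdef, MeasureTheory.setIntegral_indicator measurableSet_Ioc,
      Set.Ioc_inter_Ioc]
    rcases le_or_gt (max (a - r) 0) (min (a + r) 1) with hle | hlt
    · rw [← intervalIntegral.integral_of_le hle]
      apply hF _ _ (le_max_right _ _) hle (min_le_right _ _)
    · rw [Set.Ioc_eq_empty (not_lt.mpr hlt.le)]
      simp
  have hld := IsUnifLocDoublingMeasure.ae_tendsto_average (μ := (volume : Measure ℝ))
    hGi.locallyIntegrable 1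
  have hG0 : ∀ᵐ x ∂(volume : Measure ℝ), G x = 0 := by
    filter_upwards [hld] with x hx
    have hδ : Filter.Tendsto (fun n : ℕ => (1:ℝ)/(n+1)) Filter.atTop (nhdsWithin 0 (Set.Ioi 0)) := by
      apply tendsto_nhdsWithin_of_tendsto_nhds_of_eventually_within
      · exact tendsto_one_div_add_atTop_nhds_zero_nat
      · exact Filter.Eventually.of_forall (fun n => Set.mem_Ioi.mpr (by positivity))
    have hmem : ∀ᶠ n : ℕ in Filter.atTop, x ∈ closedBall x (1 * ((1:ℝ)/(n+1))) := by
      apply Filter.Eventually.of_forall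
      intro n
      apply Metric.mem_closedBall_self
      positivity
    have htd := hx (fun _ : ℕ => x) (fun n : ℕ => (1:ℝ)/(n+1)) hδ hmem
    have hconst : (fun n : ℕ => ⨍ y in closedBall x ((1:ℝ)/(n+1)), G y) = fun _ => (0:ℝ) := by
      funext n
      rw [MeasureTheory.setAverage_eq, hzero]
      simp
    rw [hconst] at htd
    exact (tendsto_nhds_unique tendsto_const_nhds htd).symm
  have := MeasureTheory.ae_restrict_of_ae (μ := (volume : Measure ℝ)) (s := Set.Ioc (0:ℝ) 1) hG0
  filter_upwards [this, MeasureTheory.ae_restrict_mem measurableSet_Ioc] with x hx hxm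
  rw [hGdef] at hx
  rwa [Set.indicator_of_mem hxm] at hx

lemma sphere_bounds {u g : ℝ → ℝ} (h : IsH1 u g) (hn : H1normSq u g = 1) :
    (∫ t in (0:ℝ)..1, g t ^ 2) ≤ 1 ∧ (∫ t in (0:ℝ)..1, u t ^ 2) ≤ 1 := by
  have n1 : 0 ≤ ∫ t in (0:ℝ)..1, g t ^ 2 :=
    intervalIntegral.integral_nonneg (by norm_num) (fun x _ => sq_nonneg _)
  have n2 : 0 ≤ ∫ t in (0:ℝ)..1, u t ^ 2 :=
    intervalIntegral.integral_nonneg (by norm_num) (fun x _ => sq_nonneg _)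
  unfold H1normSq at hn
  constructor <;> linarith

lemma intpos {u g : ℝ → ℝ} (h : IsH1 u g) (hn : H1normSq u g = 1) :
    0 < ∫ t in (0:ℝ)..1, u t ^ 2 := by
  by_contra hc
  push_neg at hc
  have hnn : 0 ≤ ∫ t in (0:ℝ)..1, u t ^ 2 :=
    intervalIntegral.integral_nonneg (by norm_num) (fun x _ => sq_nonneg _)
  have hz : (∫ t in (0:ℝ)..1, u t ^ 2) = 0 := le_antisymm hc hnn
  have hu0 := eq_zero_on_Icc h.contOn hz
  have hF : ∀ a b : ℝ, 0 ≤ a → a ≤ b → b ≤ 1 → (∫ s in a..b, g s) = 0 := by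
    intro a b ha hab hb
    have hd := prim_diff h (s := a) (t := b) ⟨ha, hab.trans hb⟩ ⟨ha.trans hab, hb⟩
    rw [hu0 a ⟨ha, hab.trans hb⟩, hu0 b ⟨ha.trans hab, hb⟩] at hd
    linarith
  have hae := ae_zero_of_prim_zero h.1.1 hF
  have hg2 : (∫ t in (0:ℝ)..1, g t ^ 2) = 0 := by
    rw [intervalIntegral.integral_of_le (by norm_num : (0:ℝ) ≤ 1)]
    apply MeasureTheory.integral_eq_zero_of_ae
    filter_upwards [hae] with x hx
    simp [hx]
  unfold H1normSq at hn
  rw [hg2, hz] at hn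
  norm_num at hn

lemma sup_le_two {u g : ℝ → ℝ} (h : IsH1 u g) (hn : H1normSq u g = 1) :
    ∀ t ∈ Set.Icc (0:ℝ) 1, |u t| ≤ 2 := by
  obtain ⟨hg2, hu2⟩ := sphere_bounds h hn
  have hexists : ∃ t₀ ∈ Set.Icc (0:ℝ) 1, u t₀ ^ 2 ≤ 1 := by
    by_contra hcon
    push_neg at hcon
    have hii : IntervalIntegrable (fun x => u x ^ 2 - 1) volume 0 1 := by
      apply ContinuousOn.intervalIntegrable
      rw [Set.uIcc_of_le (by norm_num : (0:ℝ) ≤ 1)]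
      exact (h.contOn.pow 2).sub continuousOn_const
    have hpos := intervalIntegral_pos_of_pos_on hii
      (fun x hx => by
        have := hcon x ⟨hx.1.le, hx.2.le⟩
        linarith) (by norm_num)
    have hii2 : IntervalIntegrable (fun x => u x ^ 2) volume 0 1 := by
      apply ContinuousOn.intervalIntegrable
      rw [Set.uIcc_of_le (by norm_num : (0:ℝ) ≤ 1)]
      exact h.contOn.pow 2
    rw [intervalIntegral.integral_sub hii2 intervalIntegrable_const] at hpos
    simp at hpos
    linarith
  obtain ⟨t₀, ht₀, hle1⟩ := hexists
  have habs0 : |u t₀| ≤ 1 := by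
    rw [← Real.sqrt_one, ← Real.sqrt_sq_eq_abs]
    exact Real.sqrt_le_sqrt hle1
  intro t ht
  have hdiff : |u t - u t₀| ≤ 1 := by
    rcases le_total t₀ t with hst | hst
    · calc |u t - u t₀| ≤ Real.sqrt (t - t₀) := holder h hg2 ht₀ ht hst
        _ ≤ 1 := by
            rw [← Real.sqrt_one]
            apply Real.sqrt_le_sqrt
            linarith [ht.2, ht₀.1]
    · calc |u t - u t₀| = |u t₀ - u t| := abs_sub_comm _ _
        _ ≤ Real.sqrt (t₀ - t) := holder h hg2 ht ht₀ hst
        _ ≤ 1 := by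
            rw [← Real.sqrt_one]
            apply Real.sqrt_le_sqrt
            linarith [ht₀.2, ht.1]
  calc |u t| = |u t₀ + (u t - u t₀)| := by ring_nf
    _ ≤ |u t₀| + |u t - u t₀| := abs_add_le _ _
    _ ≤ 2 := by linarith

lemma approx_on_grid {u gu w gw : ℝ → ℝ} (hu : IsH1 u gu) (hnu : H1normSq u gu = 1)
    (hw : IsH1 w gw) (hnw : H1normSq w gw = 1) {m : ℕ} (hm : 0 < m) {η : ℝ}
    (hgrid : ∀ j : ℕ, j ≤ m → |u ((j:ℝ)/m) - w ((j:ℝ)/m)| ≤ η)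
    {s : ℝ} (hs : s ∈ Set.Icc (0:ℝ) 1) :
    |u s - w s| ≤ η + 2 * Real.sqrt (1/(m:ℝ)) := by
  have hmR : (0:ℝ) < m := Nat.cast_pos.mpr hm
  set j := ⌊s * m⌋₊ with hj
  have hsm : 0 ≤ s * m := mul_nonneg hs.1 hmR.le
  have hjle : (j:ℝ) ≤ s * m := Nat.floor_le hsm
  have hjm : (j:ℝ) ≤ m := le_trans hjle (by nlinarith [hs.2])
  set p := (j:ℝ)/m with hp
  have hp0 : 0 ≤ p := by positivity
  have hp1 : p ≤ 1 := by rw [hp, div_le_one hmR]; exact hjm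
  have hpmem : p ∈ Set.Icc (0:ℝ) 1 := ⟨hp0, hp1⟩
  have hps : p ≤ s := by rw [hp, div_le_iff₀ hmR]; exact hjle
  have hsp : s - p ≤ 1/m := by
    have := Nat.lt_floor_add_one (s * m)
    rw [hp]
    rw [sub_le_iff_le_add, show (1:ℝ)/m + (j:ℝ)/m = ((j:ℝ)+1)/m by ring,
      le_div_iff₀ hmR]
    nlinarith
  have hu2 := (sphere_bounds hu hnu).1
  have hw2 := (sphere_bounds hw hnw).1
  have h1 : |u s - u p| ≤ Real.sqrt (1/m) := by
    calc |u s - u p| ≤ Real.sqrt (s - p) := holder hu hu2 hpmem hs hps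
      _ ≤ Real.sqrt (1/m) := Real.sqrt_le_sqrt hsp
  have h2 : |w p - w s| ≤ Real.sqrt (1/m) := by
    rw [abs_sub_comm]
    calc |w s - w p| ≤ Real.sqrt (s - p) := holder hw hw2 hpmem hs hps
      _ ≤ Real.sqrt (1/m) := Real.sqrt_le_sqrt hsp
  have h3 : |u p - w p| ≤ η := hgrid j (by exact_mod_cast hjm)
  calc |u s - w s| = |(u s - u p) + (u p - w p) + (w p - w s)| := by ring_nf
    _ ≤ |(u s - u p) + (u p - w p)| + |w p - w s| := abs_add_le _ _
    _ ≤ |u s - u p| + |u p - w p| + |w p - w s| := by linarith [abs_add_le (u s - u p) (u p - w p)]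
    _ ≤ η + 2 * Real.sqrt (1/m) := by linarith

lemma dual_diff_le_sup {u gu w gw : ℝ → ℝ} (hu : IsH1 u gu) (hw : IsH1 w gw)
    {η : ℝ} (hη : 0 ≤ η) (hsup : ∀ s ∈ Set.Icc (0:ℝ) 1, |u s - w s| ≤ η) :
    dualNormH1 (fun t => u t - w t) ≤ η := by
  have hcont : ContinuousOn (fun t => u t - w t) (Set.Icc 0 1) := hu.contOn.sub hw.contOn
  have h1 := dual_le hcont
  have hsq : (∫ t in (0:ℝ)..1, (u t - w t) ^ 2) ≤ η ^ 2 := by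
    have hii : IntervalIntegrable (fun t => (u t - w t) ^ 2) volume 0 1 := by
      apply ContinuousOn.intervalIntegrable
      rw [Set.uIcc_of_le (by norm_num : (0:ℝ) ≤ 1)]
      exact hcont.pow 2
    calc (∫ t in (0:ℝ)..1, (u t - w t) ^ 2) ≤ ∫ _ in (0:ℝ)..1, η ^ 2 := by
          apply intervalIntegral.integral_mono_on (by norm_num) hii intervalIntegrable_const
          intro x hx
          have := hsup x hx
          nlinarith [this, abs_nonneg (u x - w x), sq_abs (u x - w x)]
      _ = η ^ 2 := by simp
  calc dualNormH1 (fun t => u t - w t) ≤ Real.sqrt (∫ t in (0:ℝ)..1, (u t - w t) ^ 2) := h1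
    _ ≤ Real.sqrt (η ^ 2) := Real.sqrt_le_sqrt hsq
    _ = η := by rw [Real.sqrt_sq hη]

lemma part2 {ε : ℝ} (hε : 0 < ε) :
    ∃ (n : ℕ) (w : Fin n → ℝ → ℝ) (h : Fin n → ℝ → ℝ),
      (∀ i, IsH1 (w i) (h i) ∧ H1normSq (w i) (h i) = 1) ∧
      ∀ u g : ℝ → ℝ, IsH1 u g → H1normSq u g = 1 →
        ∃ i, dualNormH1 (fun t => u t - w i t) < ε := by
  -- choose grid size m with 2 * sqrt (1/m) ≤ ε/4
  obtain ⟨m, hm1, hmsqrt⟩ : ∃ m : ℕ, 0 < m ∧ 2 * Real.sqrt (1/(m:ℝ)) ≤ ε/4 := by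
    obtain ⟨m, hm⟩ := exists_nat_gt ((64:ℝ)/ε^2)
    refine ⟨m + 1, Nat.succ_pos _, ?_⟩
    have hm0 : (0:ℝ) < (m:ℝ) + 1 := by positivity
    have h64 : (64:ℝ)/ε^2 < (m:ℝ) + 1 := by push_cast; linarith
    have hle : 1/((m:ℝ)+1) ≤ ε^2/64 := by
      rw [div_le_div_iff₀ hm0 (by norm_num)]
      rw [div_lt_iff₀ (by positivity)] at h64
      nlinarith
    have : Real.sqrt (1/((m:ℝ)+1)) ≤ Real.sqrt (ε^2/64) := Real.sqrt_le_sqrt hle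
    have heq : Real.sqrt (ε^2/64) = ε/8 := by
      rw [show ε^2/64 = (ε/8)^2 by ring, Real.sqrt_sq (by positivity)]
    push_cast
    rw [heq] at this
    linarith
  -- the grid map
  set Φ : (ℝ → ℝ) → (Fin (m+1) → ℝ) := fun u => fun j => u ((j:ℝ)/m) with hΦ
  set A : Set (Fin (m+1) → ℝ) :=
    Φ '' {u | ∃ g, IsH1 u g ∧ H1normSq u g = 1} with hA
  have hAK : A ⊆ Set.pi Set.univ (fun _ : Fin (m+1) => Set.Icc (-2:ℝ) 2) := by
    rintro _ ⟨u, ⟨g, hu, hn⟩, rfl⟩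
    intro j _
    have hj : ((j:ℝ):ℝ)/m ∈ Set.Icc (0:ℝ) 1 := by
      constructor
      · positivity
      · rw [div_le_one (by exact_mod_cast hm1)]
        exact_mod_cast Nat.le_of_lt_succ j.2
    have := sup_le_two hu hn _ hj
    rw [abs_le] at this
    exact this
  have hK : IsCompact (Set.pi Set.univ (fun _ : Fin (m+1) => Set.Icc (-2:ℝ) 2)) :=
    isCompact_univ_pi (fun _ => isCompact_Icc)
  have hTB : TotallyBounded A := (hK.totallyBounded).subset hAK
  obtain ⟨t, hts, htf, hcover⟩ := totallyBounded_iff_subset.mp hTB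
    {p : (Fin (m+1) → ℝ) × (Fin (m+1) → ℝ) | dist p.1 p.2 < ε/4}
    (Metric.dist_mem_uniformity (by positivity))
  -- enumerate t
  set n := htf.toFinset.card with hn
  set e := htf.toFinset.equivFin with he
  have hy : ∀ i : Fin n, ∃ u g, (IsH1 u g ∧ H1normSq u g = 1) ∧ Φ u = (e.symm i : _) := by
    intro i
    have hmem : ((e.symm i : htf.toFinset) : Fin (m+1) → ℝ) ∈ t := by
      have := (e.symm i).2
      rwa [Set.Finite.mem_toFinset] at this
    obtain ⟨u, ⟨g, hu⟩, hΦu⟩ := hts hmem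
    exact ⟨u, g, hu, hΦu⟩
  choose w h hwh hΦw using hy
  refine ⟨n, w, h, hwh, ?_⟩
  intro u g hu hnu
  have hmemA : Φ u ∈ A := ⟨u, ⟨g, hu, hnu⟩, rfl⟩
  obtain ⟨y, hyt, hdy⟩ := Set.mem_iUnion₂.mp (hcover hmemA)
  set i := e ⟨y, htf.mem_toFinset.mpr hyt⟩ with hi
  have hyi : Φ (w i) = y := by
    rw [hΦw i, hi, Equiv.symm_apply_apply]
  have hdist : dist (Φ u) (Φ (w i)) < ε/4 := by rw [hyi]; exact hdy
  have hgrid : ∀ j : ℕ, j ≤ m → |u ((j:ℝ)/m) - (w i) ((j:ℝ)/m)| ≤ ε/4 := by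
    intro j hj
    set jf : Fin (m+1) := ⟨j, by omega⟩ with hjf
    have := dist_le_pi_dist (Φ u) (Φ (w i)) jf
    rw [hΦ] at this
    simp only [Real.dist_eq] at this
    have hcast : ((jf:ℕ):ℝ) = (j:ℝ) := by rw [hjf]
    rw [hcast] at this
    linarith [le_of_lt hdist, this]
  have hsup : ∀ s ∈ Set.Icc (0:ℝ) 1, |u s - w i s| ≤ ε/4 + ε/4 := by
    intro s hs
    have := approx_on_grid hu hnu (hwh i).1 (hwh i).2 hm1 hgrid hs
    linarith
  have := dual_diff_le_sup hu (hwh i).1 (by positivity : (0:ℝ) ≤ ε/4 + ε/4) hsup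
  exact ⟨i, lt_of_le_of_lt this (by linarith)⟩


/-- The map `f : S → E*`, `f(u)(v) = -∫₀¹ u v`, on the unit sphere `S` of `H¹(0,1)` is a
compact map (continuous from the `H¹` norm to the dual norm, with totally bounded — i.e.
relatively compact — image in the dual `E*`), and for every `u ∈ S` one has
`f(u)(u) < 0 < ‖f(u)‖_{E*}`; in particular there is no `û ∈ S` with
`f(û)(û) = ‖f(û)‖_{E*}`. -/
theorem stmt6 :
    -- continuity of `f` on the unit sphere, from the `H¹` norm to the dual norm
    (∀ u g : ℝ → ℝ, IsH1 u g → H1normSq u g = 1 → ∀ ε > (0 : ℝ), ∃ δ > (0 : ℝ),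
      ∀ w h : ℝ → ℝ, IsH1 w h → H1normSq w h = 1 →
        Real.sqrt (H1normSq (fun t => u t - w t) (fun t => g t - h t)) < δ →
        dualNormH1 (fun t => u t - w t) < ε) ∧
    -- the image `f(S)` is totally bounded in the (complete) dual space, i.e. `f(S)` is
    -- relatively compact in `E*`
    (∀ ε > (0 : ℝ), ∃ (n : ℕ) (w : Fin n → ℝ → ℝ) (h : Fin n → ℝ → ℝ),
      (∀ i, IsH1 (w i) (h i) ∧ H1normSq (w i) (h i) = 1) ∧
      ∀ u g : ℝ → ℝ, IsH1 u g → H1normSq u g = 1 →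
        ∃ i, dualNormH1 (fun t => u t - w i t) < ε) ∧
    -- `f(u)(u) < 0 < ‖f(u)‖` for all `u ∈ S`
    (∀ u g : ℝ → ℝ, IsH1 u g → H1normSq u g = 1 →
      (-∫ t in (0 : ℝ)..1, u t * u t) < 0 ∧ 0 < dualNormH1 u) ∧
    -- hence no `û ∈ S` satisfies `f(û)(û) = ‖f(û)‖`
    ¬ ∃ u g : ℝ → ℝ, IsH1 u g ∧ H1normSq u g = 1 ∧
        (-∫ t in (0 : ℝ)..1, u t * u t) = dualNormH1 u := by

  have key3 : ∀ u g : ℝ → ℝ, IsH1 u g → H1normSq u g = 1 →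
      (-∫ t in (0 : ℝ)..1, u t * u t) < 0 ∧ 0 < dualNormH1 u := by
    intro u g hu hn
    have hsq : (∫ t in (0:ℝ)..1, u t * u t) = ∫ t in (0:ℝ)..1, u t ^ 2 := by
      simp only [pow_two]
    have hpos := intpos hu hn
    constructor
    · rw [hsq]; linarith
    · have hge := dual_ge hu.contOn hu (le_of_eq hn)
      have : |∫ t in (0:ℝ)..1, u t * u t| = ∫ t in (0:ℝ)..1, u t ^ 2 := by
        rw [hsq, abs_of_pos hpos]
      rw [this] at hge
      linarith
  refine ⟨?_, ?_, key3, ?_⟩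
  · intro u g hu hnu ε hε
    refine ⟨ε, hε, ?_⟩
    intro w h hw hnw hclose
    have hcont : ContinuousOn (fun t => u t - w t) (Set.Icc 0 1) := hu.contOn.sub hw.contOn
    have h1 := dual_le hcont
    have h2 : (∫ t in (0:ℝ)..1, (u t - w t) ^ 2)
        ≤ H1normSq (fun t => u t - w t) (fun t => g t - h t) := by
      unfold H1normSq
      have : 0 ≤ ∫ t in (0:ℝ)..1, (g t - h t) ^ 2 :=
        intervalIntegral.integral_nonneg (by norm_num) (fun x _ => sq_nonneg _)
      linarith
    calc dualNormH1 (fun t => u t - w t)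
        ≤ Real.sqrt (∫ t in (0:ℝ)..1, (u t - w t) ^ 2) := h1
      _ ≤ Real.sqrt (H1normSq (fun t => u t - w t) (fun t => g t - h t)) :=
          Real.sqrt_le_sqrt h2
      _ < ε := hclose
  · intro ε hε
    exact part2 hε
  · rintro ⟨u, g, hu, hn, heq⟩
    obtain ⟨hlt, hpos⟩ := key3 u g hu hn
    rw [heq] at hlt
    linarith
end

section
/- Let E be a reflexive real Banach space with the Kadec-Klee property, {φ_n} a sequence in E* \ {0} converging in norm to φ ≠ 0, and {x_n} a sequence in the unit sphere S with φ_n(x_n) = ‖φ_n‖_{E*} for all n. Then there exists a subsequence of {x_n} converging in norm to some x ∈ S with φ(x) = ‖φ‖_{E*}. -/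
/-!
A bounded sequence in a reflexive space has a weakly convergent subsequence: its closed span `F`
is separable and reflexive, so `F*` is separable and sequential Banach–Alaoglu applies in `F**`.
Along such a subsequence `x (σ k) ⇀ y`, the norm convergence `φₙ → φ` gives
`φ (x n) = ‖φₙ‖ + (φ - φₙ) (x n) → ‖φ‖`, so `φ y = ‖φ‖`. Hence `‖y‖ ≥ 1` as `φ ≠ 0`, while weak
lower semicontinuity of the norm gives `‖y‖ ≤ 1`; the Kadec–Klee property upgrades the weak
convergence to norm convergence.
-/

open NormedSpace Filter Topology

section RCLike

variable {𝕜 : Type*} [RCLike 𝕜] {X : Type*} [NormedAddCommGroup X] [NormedSpace 𝕜 X]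

theorem Submodule.exists_strongDual_eq_zero_ne_zero_of_notMem (p : Submodule 𝕜 X)
    (hp : IsClosed (p : Set X)) {y : X} (hy : y ∉ p) :
    ∃ f : StrongDual 𝕜 X, (∀ z ∈ p, f z = 0) ∧ f y ≠ 0 := by
  -- `X ⧸ p` is Hausdorff, so its dual separates the class of `y` from `0`
  have := hp
  have hy' : p.mkQL y ≠ 0 := by simpa [Submodule.Quotient.mk_eq_zero] using hy
  obtain ⟨g, hg⟩ := SeparatingDual.exists_ne_zero (R := 𝕜) hy'
  exact ⟨g.comp p.mkQL, fun z hz => by simp [(Submodule.Quotient.mk_eq_zero p).2 hz], hg⟩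

theorem StrongDual.exists_half_norm_le_norm_apply (g : StrongDual 𝕜 X) :
    ∃ v : X, ‖v‖ ≤ 1 ∧ ‖g‖ / 2 ≤ ‖g v‖ := by
  by_cases hg : g = 0
  · exact ⟨0, by simp [hg]⟩
  · obtain ⟨w, hw1, hw2⟩ := g.exists_lt_apply_of_lt_opNorm (r := ‖g‖ / 2)
      (by linarith [norm_pos_iff.mpr hg])
    exact ⟨w, hw1.le, hw2.le⟩

variable (𝕜) in
theorem separableSpace_of_separableSpace_strongDual
    [TopologicalSpace.SeparableSpace (StrongDual 𝕜 X)] : TopologicalSpace.SeparableSpace X := by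
  obtain ⟨d, hd⟩ := TopologicalSpace.exists_dense_seq (StrongDual 𝕜 X)
  choose v hv_norm hv_apply using fun n => (d n).exists_half_norm_le_norm_apply
  set S := Submodule.span 𝕜 (Set.range v)
  have hS : ∀ y, y ∈ S.topologicalClosure := by
    intro y
    by_contra hy
    obtain ⟨f, hfS, hfy⟩ := S.topologicalClosure.exists_strongDual_eq_zero_ne_zero_of_notMem
      S.isClosed_topologicalClosure hy
    have hf : 0 < ‖f‖ := norm_pos_iff.mpr fun h => hfy (by simp [h])
    obtain ⟨n, hn⟩ := Metric.denseRange_iff.mp hd f (‖f‖ / 4) (by positivity)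
    rw [dist_eq_norm] at hn
    -- `d n` nearly attains its norm at `v n`, where `f` vanishes
    have hfv : f (v n) = 0 :=
      hfS _ (S.le_topologicalClosure (Submodule.subset_span ⟨n, rfl⟩))
    have hdv : ‖d n (v n)‖ ≤ ‖f - d n‖ :=
      calc ‖d n (v n)‖ = ‖(f - d n) (v n)‖ := by simp [hfv]
        _ ≤ ‖f - d n‖ * ‖v n‖ := (f - d n).le_opNorm _
        _ ≤ ‖f - d n‖ := mul_le_of_le_one_right (norm_nonneg _) (hv_norm n)
    linarith [hv_apply n, norm_sub_norm_le f (d n)]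
  exact TopologicalSpace.isSeparable_univ_iff.mp
    ((TopologicalSpace.isSeparable_closure.mpr (Set.countable_range v).isSeparable.span).mono
      fun y _ => hS y)

theorem Submodule.surjective_inclusionInDoubleDual_of_isClosed
    (hrefl : Function.Surjective (inclusionInDoubleDual 𝕜 X))
    (p : Submodule 𝕜 X) (hp : IsClosed (p : Set X)) :
    Function.Surjective (inclusionInDoubleDual 𝕜 p) := by
  intro g
  obtain ⟨y, hy⟩ := hrefl (g.comp ((ContinuousLinearMap.compL 𝕜 p X 𝕜).flip p.subtypeL))
  have hy_apply (ψ : StrongDual 𝕜 X) : ψ y = g (ψ.comp p.subtypeL) := congr($hy ψ)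
  have hyp : y ∈ p := by
    by_contra hyp
    obtain ⟨f, hfp, hfy⟩ := p.exists_strongDual_eq_zero_ne_zero_of_notMem hp hyp
    have hf : f.comp p.subtypeL = 0 := by ext z; exact hfp _ z.2
    exact hfy (by rw [hy_apply, hf, map_zero])
  refine ⟨⟨y, hyp⟩, ContinuousLinearMap.ext fun f => ?_⟩
  obtain ⟨ψ, hψ, -⟩ := exists_extension_norm_eq p f
  have hψf : ψ.comp p.subtypeL = f := ContinuousLinearMap.ext hψ
  rw [dual_def, ← hψ, ← hψf]
  exact hy_apply ψ

theorem exists_subseq_tendsto_apply_of_separableSpace_strongDual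
    [TopologicalSpace.SeparableSpace (StrongDual 𝕜 X)] {x : ℕ → X} {r : ℝ}
    (hx : ∀ n, ‖x n‖ ≤ r) :
    ∃ σ : ℕ → ℕ, StrictMono σ ∧ ∃ L : StrongDual 𝕜 (StrongDual 𝕜 X),
      ∀ ψ : StrongDual 𝕜 X, Tendsto (fun k => ψ (x (σ k))) atTop (𝓝 (L ψ)) := by
  have hmem (n : ℕ) : StrongDual.toWeakDual (inclusionInDoubleDual 𝕜 X (x n)) ∈
      WeakDual.toStrongDual ⁻¹' Metric.closedBall 0 r :=
    (dist_zero_right (inclusionInDoubleDual 𝕜 X (x n))).le.trans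
      ((double_dual_bound 𝕜 X (x n)).trans (hx n))
  obtain ⟨L, -, σ, hσ, hL⟩ := WeakDual.isSeqCompact_closedBall 𝕜 _ 0 r hmem
  exact ⟨σ, hσ, L, tendsto_iff_forall_eval_tendsto_topDualPairing.mp hL⟩

theorem exists_weak_tendsto_subseq_of_surjective_inclusionInDoubleDual
    (hrefl : Function.Surjective (inclusionInDoubleDual 𝕜 X)) {x : ℕ → X} {r : ℝ}
    (hx : ∀ n, ‖x n‖ ≤ r) :
    ∃ σ : ℕ → ℕ, StrictMono σ ∧ ∃ y : X,
      ∀ ψ : StrongDual 𝕜 X, Tendsto (fun k => ψ (x (σ k))) atTop (𝓝 (ψ y)) := by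
  set F := (Submodule.span 𝕜 (Set.range x)).topologicalClosure
  have hxF (n : ℕ) : x n ∈ F :=
    Submodule.le_topologicalClosure _ (Submodule.subset_span ⟨n, rfl⟩)
  have : TopologicalSpace.SeparableSpace F :=
    (TopologicalSpace.isSeparable_closure.mpr
      (Set.countable_range x).isSeparable.span).separableSpace
  have hFrefl := F.surjective_inclusionInDoubleDual_of_isClosed hrefl
    (Submodule.isClosed_topologicalClosure _)
  have : TopologicalSpace.SeparableSpace (StrongDual 𝕜 (StrongDual 𝕜 F)) :=
    hFrefl.denseRange.separableSpace (inclusionInDoubleDual 𝕜 F).continuous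
  have : TopologicalSpace.SeparableSpace (StrongDual 𝕜 F) :=
    separableSpace_of_separableSpace_strongDual 𝕜
  obtain ⟨σ, hσ, L, hL⟩ := exists_subseq_tendsto_apply_of_separableSpace_strongDual (𝕜 := 𝕜)
    (x := fun n => (⟨x n, hxF n⟩ : F)) hx
  obtain ⟨y, rfl⟩ := hFrefl L
  exact ⟨σ, hσ, y, fun ψ => hL (ψ.comp F.subtypeL)⟩

theorem norm_le_of_forall_tendsto_apply {x : ℕ → X} {y : X} {r : ℝ} (hx : ∀ n, ‖x n‖ ≤ r)
    (hy : ∀ ψ : StrongDual 𝕜 X, Tendsto (fun n => ψ (x n)) atTop (𝓝 (ψ y))) : ‖y‖ ≤ r :=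
  norm_le_dual_bound 𝕜 y ((norm_nonneg _).trans (hx 0)) fun f =>
    le_of_tendsto (hy f).norm (Eventually.of_forall fun n =>
      calc ‖f (x n)‖ ≤ ‖f‖ * ‖x n‖ := f.le_opNorm _
        _ ≤ r * ‖f‖ := by rw [mul_comm]; gcongr; exact hx n)

end RCLike

section Real

variable {X : Type*} [NormedAddCommGroup X] [NormedSpace ℝ X]

theorem tendsto_apply_norm_of_tendsto_of_apply_eq_norm {φs : ℕ → StrongDual ℝ X}
    {φ : StrongDual ℝ X} (hconv : Tendsto φs atTop (𝓝 φ)) {x : ℕ → X} (hx : ∀ n, ‖x n‖ ≤ 1)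
    (heq : ∀ n, φs n (x n) = ‖φs n‖) :
    Tendsto (fun n => φ (x n)) atTop (𝓝 ‖φ‖) := by
  have herr : Tendsto (fun n => (φ - φs n) (x n)) atTop (𝓝 0) := by
    refine squeeze_zero_norm (fun n => ((φ - φs n).le_opNorm _).trans
      (mul_le_of_le_one_right (norm_nonneg _) (hx n))) ?_
    simpa [norm_sub_rev] using tendsto_iff_norm_sub_tendsto_zero.mp hconv
  simpa [heq] using hconv.norm.add herr

theorem one_le_norm_of_apply_eq_norm {φ : StrongDual ℝ X} (hφ : φ ≠ 0) {y : X}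
    (hy : φ y = ‖φ‖) : 1 ≤ ‖y‖ := by
  have hφpos : 0 < ‖φ‖ := norm_pos_iff.mpr hφ
  have : ‖φ‖ * 1 ≤ ‖φ‖ * ‖y‖ :=
    calc ‖φ‖ * 1 = ‖φ y‖ := by rw [hy, mul_one, Real.norm_of_nonneg hφpos.le]
      _ ≤ ‖φ‖ * ‖y‖ := φ.le_opNorm y
  exact le_of_mul_le_mul_left this hφpos

end Real

theorem stmt9_general (E : Type*) [NormedAddCommGroup E] [NormedSpace ℝ E]
    (hrefl : Function.Surjective (inclusionInDoubleDual ℝ E))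
    (hKK : ∀ (x : ℕ → E) (y : E), (∀ n, ‖x n‖ = 1) → ‖y‖ = 1 →
      (∀ φ : StrongDual ℝ E, Tendsto (fun n => φ (x n)) atTop (𝓝 (φ y))) →
      Tendsto (fun n => ‖x n - y‖) atTop (𝓝 0))
    (φs : ℕ → StrongDual ℝ E) (φ : StrongDual ℝ E) (hφ : φ ≠ 0)
    (hconv : Tendsto φs atTop (𝓝 φ))
    (x : ℕ → E) (hx : ∀ n, ‖x n‖ = 1) (heq : ∀ n, φs n (x n) = ‖φs n‖) :
    ∃ σ : ℕ → ℕ, StrictMono σ ∧ ∃ y : E, ‖y‖ = 1 ∧ φ y = ‖φ‖ ∧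
      Tendsto (fun k => x (σ k)) atTop (𝓝 y) := by
  have hx_le (n : ℕ) : ‖x n‖ ≤ 1 := (hx n).le
  obtain ⟨σ, hσ, y, hy⟩ :=
    exists_weak_tendsto_subseq_of_surjective_inclusionInDoubleDual hrefl hx_le
  have hφy : φ y = ‖φ‖ := tendsto_nhds_unique (hy φ)
    ((tendsto_apply_norm_of_tendsto_of_apply_eq_norm hconv hx_le heq).comp hσ.tendsto_atTop)
  have hy_norm : ‖y‖ = 1 :=
    le_antisymm (norm_le_of_forall_tendsto_apply (fun k => hx_le (σ k)) hy)
      (one_le_norm_of_apply_eq_norm hφ hφy)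
  exact ⟨σ, hσ, y, hy_norm, hφy,
    tendsto_iff_norm_sub_tendsto_zero.mpr (hKK _ y (fun k => hx (σ k)) hy_norm hy)⟩

/-- If `φₙ → φ ≠ 0` in `E*`, `φₙ ≠ 0`, and `xₙ ∈ S` with `φₙ xₙ = ‖φₙ‖`, then some
subsequence of `xₙ` converges in norm to a point `x ∈ S` with `φ x = ‖φ‖`. -/
theorem stmt9 (E : Type*) [NormedAddCommGroup E] [NormedSpace ℝ E] [CompleteSpace E]
    (hrefl : Function.Surjective (inclusionInDoubleDual ℝ E))
    (hKK : ∀ (x : ℕ → E) (y : E), (∀ n, ‖x n‖ = 1) → ‖y‖ = 1 →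
      (∀ φ : StrongDual ℝ E, Tendsto (fun n => φ (x n)) atTop (𝓝 (φ y))) →
      Tendsto (fun n => ‖x n - y‖) atTop (𝓝 0))
    (φs : ℕ → StrongDual ℝ E) (φ : StrongDual ℝ E) (hφs : ∀ n, φs n ≠ 0) (hφ : φ ≠ 0)
    (hconv : Tendsto φs atTop (𝓝 φ))
    (x : ℕ → E) (hx : ∀ n, ‖x n‖ = 1) (heq : ∀ n, φs n (x n) = ‖φs n‖) :
    ∃ σ : ℕ → ℕ, StrictMono σ ∧ ∃ y : E, ‖y‖ = 1 ∧ φ y = ‖φ‖ ∧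
      Tendsto (fun k => x (σ k)) atTop (𝓝 y) :=
  stmt9_general E hrefl hKK φs φ hφ hconv x hx heq
end

section
/- Let E be an infinite-dimensional real Banach space with closed unit ball B and unit sphere S. Then there exists a continuous retraction ω : B → S, i.e., a continuous map with ω(x) = x for all x ∈ S. -/
/-!
Pick, by the Riesz lemma, a bounded sequence `u` each of whose terms is at distance at least `1`
from the span of the previous ones, and let `γ` be the polygonal path through `u 0, u 1, …`.
Pieces of `γ` whose parameters differ by at least `2` stay `1/5` apart, so the bumps
`x ↦ max 0 (1 - 20 dist(x, γ[n, ∞)))` form a locally finite family and their sum `τ` is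
continuous, with `τ (γ t) > t`. Then `x ↦ γ (τ x + 1)` is a bounded continuous map without
fixed points: a fixed point `x = γ (τ x + 1)` would give `τ x > τ x + 1`. Rescaled into the open
unit ball it is a map `g`, and sending `x` to the point where the ray from `g x` through `x`
leaves the ball is the retraction; the exit time is continuous because, by convexity of the
norm along the ray, it exceeds `a` exactly where the norm at time `a` is below `1`.
-/

open Metric Set Submodule AffineMap

section

variable {E : Type*} [NormedAddCommGroup E] [NormedSpace ℝ E]

lemma exists_norm_le_forall_one_le_norm_sub_of_finite (hdim : ¬ FiniteDimensional ℝ E)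
    {s : Set E} (hs : s.Finite) : ∃ x : E, ‖x‖ ≤ 3 ∧ ∀ y ∈ span ℝ s, 1 ≤ ‖x - y‖ := by
  have : FiniteDimensional ℝ (span ℝ s) := FiniteDimensional.span_of_finite ℝ hs
  have hne : span ℝ s ≠ ⊤ := fun h =>
    hdim (Module.Finite.equiv ((LinearEquiv.ofEq _ _ h).trans topEquiv))
  exact riesz_lemma_of_norm_lt (c := (2 : ℝ)) (by norm_num) (by norm_num)
    (closed_of_finiteDimensional _) (SetLike.exists_not_mem_of_ne_top _ hne)

lemma exists_seq_norm_le_forall_one_le_norm_sub (hdim : ¬ FiniteDimensional ℝ E) :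
    ∃ u : ℕ → E, (∀ n, ‖u n‖ ≤ 3) ∧ ∀ n, ∀ y ∈ span ℝ (u '' Iio n), 1 ≤ ‖u n - y‖ := by
  classical
  choose next hnext using fun s : Finset E =>
    exists_norm_le_forall_one_le_norm_sub_of_finite hdim s.finite_toSet
  let S : ℕ → Finset E := fun n => Nat.rec ∅ (fun _ s => insert (next s) s) n
  have hS : ∀ {k n}, k < n → next (S k) ∈ S n := by
    intro k n hkn
    induction n with
    | zero => omega
    | succ n ih =>
      rcases (Nat.lt_succ_iff.1 hkn).eq_or_lt with rfl | hk
      · exact Finset.mem_insert_self _ _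
      · exact Finset.mem_insert_of_mem (ih hk)
  refine ⟨fun n => next (S n), fun n => (hnext _).1, fun n y hy => (hnext _).2 y (span_mono ?_ hy)⟩
  rintro _ ⟨k, hk, rfl⟩
  exact hS hk

noncomputable def polygonalPath (u : ℕ → E) (t : ℝ) : E :=
  ∑ᶠ n : ℕ, max 0 (1 - |t - n|) • u n

namespace polygonalPath

variable {u : ℕ → E}

lemma continuous (u : ℕ → E) : Continuous (polygonalPath u) := by
  refine continuous_finsum (fun n => by fun_prop) fun t₀ =>
    ⟨Iio (t₀ + 1), Iio_mem_nhds (by linarith), ?_⟩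
  refine (finite_Iio (⌈t₀⌉₊ + 2)).subset fun n ⟨t, ht, ht₀⟩ => ?_
  have : (n : ℝ) < t + 1 := by
    by_contra! h
    apply ht
    show max 0 (1 - |t - n|) • u n = 0
    rw [max_eq_left (by linarith [neg_abs_le (t - n)]), zero_smul]
  have : (n : ℝ) < ⌈t₀⌉₊ + 2 := by linarith [mem_Iio.1 ht₀, Nat.le_ceil t₀]
  exact_mod_cast this

lemma natCast_add (u : ℕ → E) (n : ℕ) {s : ℝ} (hs0 : 0 ≤ s) (hs1 : s ≤ 1) :
    polygonalPath u (n + s) = lineMap (u n) (u (n + 1)) s := by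
  rw [polygonalPath, finsum_eq_sum_of_support_subset (s := {n, n + 1}), Finset.sum_pair (by omega),
    lineMap_apply_module]
  · push_cast
    congr 2
    · rw [show (n : ℝ) + s - n = s by ring, abs_of_nonneg hs0, max_eq_right (by linarith)]
    · rw [show (n : ℝ) + s - (n + 1) = -(1 - s) by ring, abs_neg, abs_of_nonneg (by linarith),
        max_eq_right (by linarith)]
      ring
  · intro k hk
    contrapose! hk
    have hk' : k + 1 ≤ n ∨ n + 2 ≤ k := by simp at hk; omega
    have : 1 ≤ |(n : ℝ) + s - k| := by
      rcases hk' with hk' | hk'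
      · have : (k : ℝ) + 1 ≤ n := by exact_mod_cast hk'
        exact le_abs.2 (Or.inl (by linarith))
      · have : (n : ℝ) + 2 ≤ k := by exact_mod_cast hk'
        exact le_abs.2 (Or.inr (by linarith))
    simp [max_eq_left (sub_nonpos.2 this)]

lemma eq_lineMap_floor (u : ℕ → E) {t : ℝ} (ht : 0 ≤ t) :
    polygonalPath u t = lineMap (u ⌊t⌋₊) (u (⌊t⌋₊ + 1)) (t - ⌊t⌋₊) := by
  conv_lhs => rw [← add_sub_cancel (⌊t⌋₊ : ℝ) t]
  exact natCast_add u _ (sub_nonneg.2 (Nat.floor_le ht))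
    (by linarith [Nat.lt_floor_add_one t])

lemma norm_le {R : ℝ} (hu : ∀ n, ‖u n‖ ≤ R) {t : ℝ} (ht : 0 ≤ t) : ‖polygonalPath u t‖ ≤ R := by
  rw [← mem_closedBall_zero_iff, eq_lineMap_floor u ht]
  exact (convex_closedBall 0 R).lineMap_mem (mem_closedBall_zero_iff.2 (hu _))
    (mem_closedBall_zero_iff.2 (hu _))
    ⟨sub_nonneg.2 (Nat.floor_le ht), by linarith [Nat.lt_floor_add_one t]⟩

lemma mem_span (u : ℕ → E) {t : ℝ} (ht : 0 ≤ t) :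
    polygonalPath u t ∈ span ℝ (u '' Iio (⌊t⌋₊ + 2)) := by
  have hmem : ∀ k < ⌊t⌋₊ + 2, u k ∈ span ℝ (u '' Iio (⌊t⌋₊ + 2)) :=
    fun k hk => subset_span (mem_image_of_mem u hk)
  rw [eq_lineMap_floor u ht, lineMap_apply_module]
  exact add_mem (smul_mem _ _ (hmem _ (by omega))) (smul_mem _ _ (hmem _ (by omega)))

section Separated

variable (hsep : ∀ n, ∀ y ∈ span ℝ (u '' Iio n), 1 ≤ ‖u n - y‖)
include hsep

lemma le_norm_smul_sub {n : ℕ} {c : ℝ} (hc : 0 < c) {y : E} (hy : y ∈ span ℝ (u '' Iio n)) :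
    c ≤ ‖c • u n - y‖ := by
  have hy' : c • u n - y = c • (u n - c⁻¹ • y) := by
    rw [smul_sub, smul_inv_smul₀ hc.ne']
  rw [hy', norm_smul, Real.norm_of_nonneg hc.le]
  exact le_mul_of_one_le_right hc.le (hsep n _ (smul_mem _ _ hy))

lemma le_norm_lineMap_sub (hu : ∀ n, ‖u n‖ ≤ 3) {m : ℕ} {y : E} (hy : y ∈ span ℝ (u '' Iio m))
    {s : ℝ} (hs0 : 0 ≤ s) : 1 / 5 ≤ ‖lineMap (u m) (u (m + 1)) s - y‖ := by
  rw [lineMap_apply_module]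
  rcases le_or_gt (1 / 5) s with hs | hs
  · have hz : y - (1 - s) • u m ∈ span ℝ (u '' Iio (m + 1)) :=
      sub_mem (span_mono (image_mono (Iio_subset_Iio m.le_succ)) hy)
        (smul_mem _ _ (subset_span (mem_image_of_mem u (Nat.lt_succ_self m))))
    have := le_norm_smul_sub hsep (by linarith) hz
    rw [show (1 - s) • u m + s • u (m + 1) - y = s • u (m + 1) - (y - (1 - s) • u m) by abel]
    linarith
  · have h₁ := le_norm_smul_sub hsep (c := 1 - s) (by linarith) hy
    have h₂ : ‖s • u (m + 1)‖ ≤ s * 3 := by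
      rw [norm_smul, Real.norm_of_nonneg hs0]
      exact mul_le_mul_of_nonneg_left (hu _) hs0
    have := norm_le_add_norm_add ((1 - s) • u m - y) (s • u (m + 1))
    rw [sub_add_eq_add_sub] at this
    linarith

lemma le_norm_sub (hu : ∀ n, ‖u n‖ ≤ 3) {t t' : ℝ} (ht : 0 ≤ t) (htt' : t + 2 ≤ t') :
    1 / 5 ≤ ‖polygonalPath u t' - polygonalPath u t‖ := by
  have hfloor : ⌊t⌋₊ + 2 ≤ ⌊t'⌋₊ :=
    Nat.le_floor (by push_cast; linarith [Nat.floor_le ht])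
  rw [eq_lineMap_floor u (by linarith)]
  exact le_norm_lineMap_sub hsep hu
    (span_mono (image_mono (Iio_subset_Iio hfloor)) (mem_span u ht))
    (sub_nonneg.2 (Nat.floor_le (by linarith)))

end Separated

end polygonalPath

noncomputable def tailBump (u : ℕ → E) (n : ℕ) (x : E) : ℝ :=
  max 0 (1 - 20 * infDist x (polygonalPath u '' Ici n))

noncomputable def tailCount (u : ℕ → E) (x : E) : ℝ :=
  ∑ᶠ n, tailBump u n x

section TailCount

variable {u : ℕ → E} (hsep : ∀ n, ∀ y ∈ span ℝ (u '' Iio n), 1 ≤ ‖u n - y‖)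
  (hu : ∀ n, ‖u n‖ ≤ 3)
include hsep hu

lemma finite_setOf_infDist_tail_lt (x : E) :
    {n : ℕ | infDist x (polygonalPath u '' Ici n) < 1 / 10}.Finite := by
  rcases eq_empty_or_nonempty {n : ℕ | infDist x (polygonalPath u '' Ici n) < 1 / 10}
    with h | ⟨n₀, hn₀⟩
  · exact h ▸ finite_empty
  obtain ⟨_, ⟨a, ha, rfl⟩, hxa⟩ := (infDist_lt_iff (nonempty_Ici.image _)).1 hn₀
  refine (finite_Iio (⌈a⌉₊ + 2)).subset fun m hm => mem_Iio.2 <| lt_of_not_ge fun hma => ?_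
  obtain ⟨_, ⟨b, hb, rfl⟩, hxb⟩ := (infDist_lt_iff (nonempty_Ici.image _)).1 hm
  have hab : a + 2 ≤ b := by
    have : ((⌈a⌉₊ + 2 : ℕ) : ℝ) ≤ m := by exact_mod_cast hma
    push_cast at this
    linarith [Nat.le_ceil a, mem_Ici.1 hb]
  have := polygonalPath.le_norm_sub hsep hu ((Nat.cast_nonneg n₀).trans ha) hab
  rw [← dist_eq_norm] at this
  linarith [dist_triangle_left (polygonalPath u b) (polygonalPath u a) x]

lemma locallyFinite_support_tailBump :
    LocallyFinite fun n => Function.support (tailBump u n) := by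
  refine fun x₀ => ⟨ball x₀ (1 / 20), ball_mem_nhds _ (by norm_num),
    (finite_setOf_infDist_tail_lt hsep hu x₀).subset fun n ⟨x, hx, hxx₀⟩ => ?_⟩
  have hx : infDist x (polygonalPath u '' Ici n) < 1 / 20 := by
    by_contra! h
    exact hx (max_eq_left (by linarith))
  have := infDist_le_infDist_add_dist (x := x₀) (y := x) (s := polygonalPath u '' Ici n)
  rw [mem_ball'] at hxx₀
  show infDist x₀ (polygonalPath u '' Ici n) < 1 / 10
  linarith

lemma continuous_tailCount : Continuous (tailCount u) :=
  continuous_finsum (fun n => by unfold tailBump; fun_prop)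
    (locallyFinite_support_tailBump hsep hu)

lemma lt_tailCount_polygonalPath {t : ℝ} (ht : 0 ≤ t) :
    t < tailCount u (polygonalPath u t) := by
  set x := polygonalPath u t
  have hone : ∀ n ∈ Finset.range (⌊t⌋₊ + 1), tailBump u n x = 1 := fun n hn => by
    have hnt : (n : ℝ) ≤ t :=
      (Nat.cast_le.2 (Nat.lt_succ_iff.1 (Finset.mem_range.1 hn))).trans (Nat.floor_le ht)
    simp [tailBump, infDist_zero_of_mem (mem_image_of_mem _ (mem_Ici.2 hnt)), x]
  have hfin : (Function.support fun n => tailBump u n x).Finite :=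
    (locallyFinite_support_tailBump hsep hu).point_finite x
  calc t < ⌊t⌋₊ + 1 := Nat.lt_floor_add_one t
    _ = ∑ n ∈ Finset.range (⌊t⌋₊ + 1), tailBump u n x := by simp [Finset.sum_congr rfl hone]
    _ ≤ ∑ n ∈ hfin.toFinset ∪ Finset.range (⌊t⌋₊ + 1), tailBump u n x :=
      Finset.sum_le_sum_of_subset_of_nonneg Finset.subset_union_right
        fun n _ _ => le_max_left _ _
    _ = tailCount u x :=
      (finsum_eq_sum_of_support_subset _ (by simp)).symm

end TailCount

lemma exists_continuous_norm_le_forall_ne (hdim : ¬ FiniteDimensional ℝ E) {r : ℝ}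
    (hr : 0 < r) : ∃ f : E → E, Continuous f ∧ (∀ x, ‖f x‖ ≤ r) ∧ ∀ x, f x ≠ x := by
  obtain ⟨u, hu, hsep⟩ := exists_seq_norm_le_forall_one_le_norm_sub hdim
  have hτ : ∀ x, 0 ≤ tailCount u x + 1 := fun x =>
    add_nonneg (finsum_nonneg fun n => le_max_left _ _) zero_le_one
  set f₀ : E → E := fun x => polygonalPath u (tailCount u x + 1)
  have hf₀ : ∀ x, f₀ x ≠ x := fun x hx => by
    have := lt_tailCount_polygonalPath hsep hu (hτ x)
    rw [show polygonalPath u (tailCount u x + 1) = x from hx] at this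
    linarith
  refine ⟨fun x => (r / 3) • f₀ ((3 / r) • x), ?_, fun x => ?_, fun x hx => hf₀ ((3 / r) • x) ?_⟩
  · have hf₀ : Continuous f₀ := (polygonalPath.continuous u).comp
      ((continuous_tailCount hsep hu).add continuous_const)
    exact continuous_const.smul (hf₀.comp (continuous_const.smul continuous_id))
  · rw [norm_smul, Real.norm_of_nonneg (by positivity)]
    calc r / 3 * ‖f₀ ((3 / r) • x)‖ ≤ r / 3 * 3 :=
          mul_le_mul_of_nonneg_left (polygonalPath.norm_le hu (hτ _)) (by positivity)
      _ = r := by ring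
  · conv_rhs => rw [← hx, smul_smul, div_mul_div_cancel₀ hr.ne', div_self three_ne_zero, one_smul]

section Ray

lemma convexOn_norm_lineMap (c p : E) : ConvexOn ℝ univ fun s : ℝ => ‖lineMap c p s‖ :=
  convexOn_univ_norm.comp_affineMap (lineMap c p)

variable {c p : E} {s t : ℝ}

lemma norm_lineMap_lt_one_of_lt (hc : ‖c‖ < 1) (ht : ‖lineMap c p t‖ = 1) (hs : 0 ≤ s)
    (hst : s < t) : ‖lineMap c p s‖ < 1 := by
  rcases hs.eq_or_lt with rfl | hs
  · simpa using hc
  by_contra! h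
  refine (convexOn_norm_lineMap c p).lt_right_of_left_lt (mem_univ 0) (mem_univ t)
    (by rw [openSegment_eq_Ioo (hs.trans hst)]; exact ⟨hs, hst⟩) ?_ |>.not_ge (ht ▸ h)
  simpa using hc.trans_le h

lemma one_lt_norm_lineMap_of_lt (hc : ‖c‖ < 1) (ht : ‖lineMap c p t‖ = 1) (ht0 : 0 < t)
    (hts : t < s) : 1 < ‖lineMap c p s‖ := by
  have := (convexOn_norm_lineMap c p).lt_right_of_left_lt (mem_univ 0) (mem_univ s)
    (by rw [openSegment_eq_Ioo (ht0.trans hts)]; exact ⟨ht0, hts⟩) (by simpa [ht] using hc)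
  rwa [ht] at this

lemma norm_lineMap_lt_one_iff (hc : ‖c‖ < 1) (ht : ‖lineMap c p t‖ = 1) (ht0 : 0 < t)
    (hs : 0 ≤ s) : ‖lineMap c p s‖ < 1 ↔ s < t := by
  refine ⟨fun h => lt_of_not_ge fun hts => ?_, norm_lineMap_lt_one_of_lt hc ht hs⟩
  rcases hts.eq_or_lt with rfl | hts
  · exact h.ne ht
  · exact h.not_gt (one_lt_norm_lineMap_of_lt hc ht ht0 hts)

lemma one_lt_norm_lineMap_iff (hc : ‖c‖ < 1) (ht : ‖lineMap c p t‖ = 1) (ht0 : 0 < t)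
    (hs : 0 ≤ s) : 1 < ‖lineMap c p s‖ ↔ t < s := by
  refine ⟨fun h => lt_of_not_ge fun hst => ?_, one_lt_norm_lineMap_of_lt hc ht ht0⟩
  rcases hst.eq_or_lt with rfl | hst
  · exact h.ne' ht
  · exact h.not_gt (norm_lineMap_lt_one_of_lt hc ht hs hst)

lemma exists_norm_lineMap_eq_one (hc : ‖c‖ < 1) (hp : p ≠ c) :
    ∃ t : ℝ, 0 < t ∧ ‖lineMap c p t‖ = 1 := by
  have hpc : 0 < ‖p - c‖ := norm_pos_iff.2 (sub_ne_zero.2 hp)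
  set M := 2 / ‖p - c‖
  have hM : 0 ≤ M := by positivity
  have hcont : ContinuousOn (fun s : ℝ => ‖lineMap c p s‖) (Icc 0 M) := by fun_prop
  have hM1 : 1 ≤ ‖lineMap c p M‖ := by
    have h2 : ‖M • (p - c)‖ = 2 := by
      rw [norm_smul, Real.norm_of_nonneg hM, div_mul_cancel₀ 2 hpc.ne']
    rw [lineMap_apply_module']
    linarith [norm_le_add_norm_add (M • (p - c)) c]
  obtain ⟨t, ⟨ht0, -⟩, ht⟩ :=
    intermediate_value_Icc hM hcont (show (1 : ℝ) ∈ Icc _ _ from ⟨by simpa using hc.le, hM1⟩)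
  refine ⟨t, ht0.lt_of_ne ?_, ht⟩
  rintro rfl
  simp only [lineMap_apply_zero] at ht
  exact hc.ne ht

lemma eq_of_norm_lineMap_eq_one (hc : ‖c‖ < 1) (ht : ‖lineMap c p t‖ = 1) (ht0 : 0 < t)
    (hs : ‖lineMap c p s‖ = 1) (hs0 : 0 < s) : s = t :=
  le_antisymm (not_lt.1 fun h => ((one_lt_norm_lineMap_iff hc ht ht0 hs0.le).2 h).ne' hs)
    (not_lt.1 fun h => ((norm_lineMap_lt_one_iff hc ht ht0 hs0.le).2 h).ne hs)

lemma continuous_of_norm_lineMap_eq_one {X : Type*} [TopologicalSpace X] {c p : X → E}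
    (hc : Continuous c) (hp : Continuous p) (hc1 : ∀ x, ‖c x‖ < 1) {T : X → ℝ}
    (hT0 : ∀ x, 0 < T x) (hT : ∀ x, ‖lineMap (c x) (p x) (T x)‖ = 1) : Continuous T := by
  refine OrderTopology.continuous_iff.2 fun a => ⟨?_, ?_⟩
  · rcases lt_or_ge a 0 with ha | ha
    · convert isOpen_univ
      exact eq_univ_of_forall fun x => ha.trans (hT0 x)
    · have : T ⁻¹' Ioi a = {x | ‖lineMap (c x) (p x) a‖ < 1} :=
        ext fun x => (norm_lineMap_lt_one_iff (hc1 x) (hT x) (hT0 x) ha).symm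
      exact this ▸ isOpen_lt (by fun_prop) continuous_const
  · rcases lt_or_ge a 0 with ha | ha
    · convert isOpen_empty
      exact eq_empty_of_forall_notMem fun x hx => (hT0 x).not_gt (lt_trans hx ha)
    · have : T ⁻¹' Iio a = {x | 1 < ‖lineMap (c x) (p x) a‖} :=
        ext fun x => (one_lt_norm_lineMap_iff (hc1 x) (hT x) (hT0 x) ha).symm
      exact this ▸ isOpen_lt continuous_const (by fun_prop)

lemma exists_retraction_of_forall_ne (g : closedBall (0 : E) 1 → E) (hg : Continuous g)
    (hg1 : ∀ x, ‖g x‖ < 1) (hfix : ∀ x, g x ≠ x) :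
    ∃ ω : closedBall (0 : E) 1 → sphere (0 : E) 1,
      Continuous ω ∧ ∀ x : closedBall (0 : E) 1, (x : E) ∈ sphere (0 : E) 1 → (ω x : E) = x := by
  choose T hT0 hT using fun x => exists_norm_lineMap_eq_one (hg1 x) (hfix x).symm
  have hTc : Continuous T :=
    continuous_of_norm_lineMap_eq_one hg continuous_subtype_val hg1 hT0 hT
  refine ⟨fun x => ⟨lineMap (g x) x (T x), mem_sphere_zero_iff_norm.2 (hT x)⟩,
    (hg.lineMap continuous_subtype_val hTc).subtype_mk _, fun x hx => ?_⟩
  have hT1 : T x = 1 :=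
    eq_of_norm_lineMap_eq_one (hg1 x) (by simpa using hx) one_pos (hT x) (hT0 x)
  simp [hT1]

end Ray

end

theorem stmt12_general (E : Type*) [NormedAddCommGroup E] [NormedSpace ℝ E]
    (hdim : ¬ FiniteDimensional ℝ E) :
    ∃ ω : Metric.closedBall (0 : E) 1 → Metric.sphere (0 : E) 1,
      Continuous ω ∧
      ∀ x : Metric.closedBall (0 : E) 1, (x : E) ∈ Metric.sphere (0 : E) 1 → (ω x : E) = x := by
  obtain ⟨f, hf, hf_le, hf_ne⟩ := exists_continuous_norm_le_forall_ne hdim one_half_pos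
  exact exists_retraction_of_forall_ne (f ∘ (↑)) (hf.comp continuous_subtype_val)
    (fun x => (hf_le x).trans_lt one_half_lt_one) fun x => hf_ne x

/-- In an infinite-dimensional Banach space, the unit sphere is a retract of the closed
unit ball. -/
theorem stmt12 (E : Type*) [NormedAddCommGroup E] [NormedSpace ℝ E] [CompleteSpace E]
    (hdim : ¬ FiniteDimensional ℝ E) :
    ∃ ω : Metric.closedBall (0 : E) 1 → Metric.sphere (0 : E) 1,
      Continuous ω ∧
      ∀ x : Metric.closedBall (0 : E) 1, (x : E) ∈ Metric.sphere (0 : E) 1 → (ω x : E) = x :=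
  stmt12_general E hdim
end
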